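/- arXiv:2106.02418 — 9 statements merged into one kernel-verified Lean document; each statement's English description precedes it below -/
import Mathlib

section
/- Let ρ ∈ [−1,1] and γ ∈ ℝ with γ + √(1−ρ²) > 0. If ρ ≥ 0, then for every l > 0 one has g₂(l) ≤ g₂(−l), with strict inequality when ρ > 0; consequently, if l₁ < 0 < l₂ are zeros of g₂ such that g₂ > 0 on (l₁, l₂), then l₂ ≤ −l₁. If ρ < 0, then for every l > 0 one has g₂(l) > g₂(−l), and for zeros l₁ < 0 < l₂ of g₂ with g₂ > 0 on (l₁, l₂) one has l₁ > −l₂. -/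
/-- SVI normalized total variance shape: `N(l) = γ + ρ·l + √(l²+1)`. -/
noncomputable def Nf (γ ρ l : ℝ) : ℝ := γ + ρ * l + Real.sqrt (l ^ 2 + 1)

/-- `N'(l) = ρ + l/√(l²+1)`. -/
noncomputable def Nf' (ρ l : ℝ) : ℝ := ρ + l / Real.sqrt (l ^ 2 + 1)

/-- `N''(l) = (l²+1)^(−3/2)`. -/
noncomputable def Nf'' (l : ℝ) : ℝ := (l ^ 2 + 1) ^ (-(3 : ℝ) / 2)

/-- `h(l) = 1 − N'(l)·(l+μ)/(2N(l))`. -/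
noncomputable def hf (γ ρ μ l : ℝ) : ℝ := 1 - Nf' ρ l * (l + μ) / (2 * Nf γ ρ l)

/-- `g(l) = N'(l)/4`. -/
noncomputable def gf (ρ l : ℝ) : ℝ := Nf' ρ l / 4

/-- `g₂(l) = N''(l) − N'(l)²/(2N(l))`. -/
noncomputable def g2 (γ ρ l : ℝ) : ℝ := Nf'' l - (Nf' ρ l) ^ 2 / (2 * Nf γ ρ l)

/-- `G₁(l) = (h(l) − b·g(l))·(h(l) + b·g(l))`. -/
noncomputable def G1 (γ b ρ μ l : ℝ) : ℝ :=
  (hf γ ρ μ l - b * gf ρ l) * (hf γ ρ μ l + b * gf ρ l)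

/-- Fukasawa (weak no-arbitrage) conditions: both factors of `G₁` are positive on `ℝ`. -/
def FukasawaCond (γ b ρ μ : ℝ) : Prop :=
  ∀ l : ℝ, 0 < hf γ ρ μ l - b * gf ρ l ∧ 0 < hf γ ρ μ l + b * gf ρ l

/-- No Butterfly arbitrage (Martini–Mingone characterization): Fukasawa conditions plus
`G₁ + (b/(2σ))·g₂ ≥ 0` on `ℝ`. -/
def ArbitrageFree (γ b ρ μ σ : ℝ) : Prop :=
  FukasawaCond γ b ρ μ ∧ ∀ l : ℝ, 0 ≤ G1 γ b ρ μ l + b / (2 * σ) * g2 γ ρ l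

lemma Nf_pos (γ ρ : ℝ) (hρ : ρ ∈ Set.Icc (-1 : ℝ) 1)
    (hγ : 0 < γ + Real.sqrt (1 - ρ ^ 2)) (l : ℝ) : 0 < Nf γ ρ l := by
  obtain ⟨h1, h2⟩ := hρ
  have ht : Real.sqrt (1 - ρ ^ 2) ^ 2 = 1 - ρ ^ 2 := Real.sq_sqrt (by nlinarith)
  have ht0 : 0 ≤ Real.sqrt (1 - ρ ^ 2) := Real.sqrt_nonneg _
  have hs : Real.sqrt (l ^ 2 + 1) ^ 2 = l ^ 2 + 1 := Real.sq_sqrt (by positivity)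
  have hs0 : 0 < Real.sqrt (l ^ 2 + 1) := Real.sqrt_pos.mpr (by positivity)
  unfold Nf
  set t := Real.sqrt (1 - ρ ^ 2)
  set s := Real.sqrt (l ^ 2 + 1)
  nlinarith [sq_nonneg (l * t + ρ), sq_nonneg (s + ρ * l - t), sq_nonneg (s - ρ * l + t),
    mul_pos hs0 hs0, sq_nonneg (s + ρ * l + t)]

lemma g2_diff (γ ρ l : ℝ) (hNl : Nf γ ρ l ≠ 0) (hNnl : Nf γ ρ (-l) ≠ 0) :
    g2 γ ρ (-l) - g2 γ ρ l =
      ρ * l * (2 * Real.sqrt (l ^ 2 + 1) * (γ + Real.sqrt (l ^ 2 + 1))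
          - ρ ^ 2 * Real.sqrt (l ^ 2 + 1) ^ 2 - l ^ 2)
        / (Real.sqrt (l ^ 2 + 1) ^ 2 * Nf γ ρ l * Nf γ ρ (-l)) := by
  have hs0 : Real.sqrt (l ^ 2 + 1) ≠ 0 :=
    ne_of_gt (Real.sqrt_pos.mpr (by positivity))
  have hE : Nf'' (-l) = Nf'' l := by simp [Nf'', neg_sq]
  unfold g2
  rw [hE]
  simp only [Nf', Nf, neg_sq] at hNl hNnl ⊢
  generalize hgen : Real.sqrt (l ^ 2 + 1) = s at hNl hNnl hs0 ⊢
  have h2 : γ + ρ * -l + s = γ - ρ * l + s := by ring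
  rw [h2] at hNnl ⊢
  field_simp [hNl, hNnl, hs0]
  ring

lemma Cpos (γ ρ : ℝ) (hρ : ρ ∈ Set.Icc (-1 : ℝ) 1)
    (hγ : 0 < γ + Real.sqrt (1 - ρ ^ 2)) (l : ℝ) :
    0 < 2 * Real.sqrt (l ^ 2 + 1) * (γ + Real.sqrt (l ^ 2 + 1))
        - ρ ^ 2 * Real.sqrt (l ^ 2 + 1) ^ 2 - l ^ 2 := by
  obtain ⟨h1, h2⟩ := hρ
  have ht : Real.sqrt (1 - ρ ^ 2) ^ 2 = 1 - ρ ^ 2 := Real.sq_sqrt (by nlinarith)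
  have hs : Real.sqrt (l ^ 2 + 1) ^ 2 = l ^ 2 + 1 := Real.sq_sqrt (by positivity)
  have hs0 : 0 < Real.sqrt (l ^ 2 + 1) := Real.sqrt_pos.mpr (by positivity)
  set t := Real.sqrt (1 - ρ ^ 2)
  set s := Real.sqrt (l ^ 2 + 1)
  nlinarith [sq_nonneg (s * t - 1), mul_pos hs0 hγ]

lemma key (γ ρ : ℝ) (hρ : ρ ∈ Set.Icc (-1 : ℝ) 1)
    (hγ : 0 < γ + Real.sqrt (1 - ρ ^ 2)) (l : ℝ) (hl : 0 < l) :
    ∃ c : ℝ, 0 < c ∧ g2 γ ρ (-l) - g2 γ ρ l = ρ * c := by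
  have hNl := Nf_pos γ ρ hρ hγ l
  have hNnl := Nf_pos γ ρ hρ hγ (-l)
  have hs0 : 0 < Real.sqrt (l ^ 2 + 1) := Real.sqrt_pos.mpr (by positivity)
  refine ⟨l * (2 * Real.sqrt (l ^ 2 + 1) * (γ + Real.sqrt (l ^ 2 + 1))
          - ρ ^ 2 * Real.sqrt (l ^ 2 + 1) ^ 2 - l ^ 2)
        / (Real.sqrt (l ^ 2 + 1) ^ 2 * Nf γ ρ l * Nf γ ρ (-l)), ?_, ?_⟩
  · apply div_pos (mul_pos hl (Cpos γ ρ ⟨hρ.1, hρ.2⟩ hγ l))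
    positivity
  · rw [g2_diff γ ρ l (ne_of_gt hNl) (ne_of_gt hNnl)]
    ring

/-- symmetry comparison of g₂(l) and g₂(−l) according to the sign of ρ,
and the resulting location of the zeros l₁ < 0 < l₂ of g₂. -/
theorem g2_symmetry_comparison (γ ρ : ℝ) (hρ : ρ ∈ Set.Icc (-1 : ℝ) 1)
    (hγ : 0 < γ + Real.sqrt (1 - ρ ^ 2)) :
    (0 ≤ ρ →
      (∀ l > 0, g2 γ ρ l ≤ g2 γ ρ (-l)) ∧
      (0 < ρ → ∀ l > 0, g2 γ ρ l < g2 γ ρ (-l)) ∧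
      (∀ l₁ l₂ : ℝ, l₁ < 0 → 0 < l₂ → g2 γ ρ l₁ = 0 → g2 γ ρ l₂ = 0 →
        (∀ l ∈ Set.Ioo l₁ l₂, 0 < g2 γ ρ l) → l₂ ≤ -l₁)) ∧
    (ρ < 0 →
      (∀ l > 0, g2 γ ρ (-l) < g2 γ ρ l) ∧
      (∀ l₁ l₂ : ℝ, l₁ < 0 → 0 < l₂ → g2 γ ρ l₁ = 0 → g2 γ ρ l₂ = 0 →
        (∀ l ∈ Set.Ioo l₁ l₂, 0 < g2 γ ρ l) → -l₂ < l₁)) := by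
  have hkey := key γ ρ hρ hγ
  constructor
  · intro hρ0
    have hle : ∀ l > 0, g2 γ ρ l ≤ g2 γ ρ (-l) := by
      intro l hl
      obtain ⟨c, hc, hd⟩ := hkey l hl
      nlinarith [mul_nonneg hρ0 hc.le]
    refine ⟨hle, ?_, ?_⟩
    · intro hρp l hl
      obtain ⟨c, hc, hd⟩ := hkey l hl
      nlinarith [mul_pos hρp hc]
    · intro l₁ l₂ h1 h2 hz1 hz2 hpos
      by_contra hcon
      push_neg at hcon
      have hmem : -l₁ ∈ Set.Ioo l₁ l₂ := ⟨by linarith, hcon⟩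
      have := hpos _ hmem
      have h3 := hle (-l₁) (by linarith)
      rw [neg_neg, hz1] at h3
      linarith
  · intro hρn
    have hlt : ∀ l > 0, g2 γ ρ (-l) < g2 γ ρ l := by
      intro l hl
      obtain ⟨c, hc, hd⟩ := hkey l hl
      nlinarith [mul_neg_of_neg_of_pos hρn hc]
    refine ⟨hlt, ?_⟩
    intro l₁ l₂ h1 h2 hz1 hz2 hpos
    by_contra hcon
    push_neg at hcon
    have h4 := hlt l₂ h2
    rw [hz2] at h4
    rcases eq_or_lt_of_le hcon with heq | hlt2
    · rw [← heq, hz1] at h4; linarith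
    · have hmem : -l₂ ∈ Set.Ioo l₁ l₂ := ⟨hlt2, by linarith⟩
      have := hpos _ hmem
      linarith
end

section
/- The SVI with normalized parameters (γ, b, ρ, μ, σ) is arbitrage-free if and only if the SVI with normalized parameters (γ, b, −ρ, −μ, σ) is arbitrage-free. Equivalently, in raw SVI parameters, SVI(a, b, ρ, m, σ) is Butterfly-arbitrage-free if and only if SVI(a, b, −ρ, −m, σ) is Butterfly-arbitrage-free. -/
lemma Nf_neg (γ ρ l : ℝ) : Nf γ (-ρ) (-l) = Nf γ ρ l := by
  simp [Nf, neg_pow]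

lemma Nf'_neg (ρ l : ℝ) : Nf' (-ρ) (-l) = -Nf' ρ l := by
  simp [Nf', neg_pow]; ring

lemma Nf''_neg (l : ℝ) : Nf'' (-l) = Nf'' l := by
  simp [Nf'', neg_pow]

lemma hf_neg (γ ρ μ l : ℝ) : hf γ (-ρ) (-μ) (-l) = hf γ ρ μ l := by
  simp [hf, Nf'_neg, Nf_neg]; ring

lemma gf_neg (ρ l : ℝ) : gf (-ρ) (-l) = -gf ρ l := by
  simp [gf, Nf'_neg]; ring

lemma g2_neg (γ ρ l : ℝ) : g2 γ (-ρ) (-l) = g2 γ ρ l := by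
  simp [g2, Nf'_neg, Nf_neg, Nf''_neg]

lemma G1_neg (γ b ρ μ l : ℝ) : G1 γ b (-ρ) (-μ) (-l) = G1 γ b ρ μ l := by
  simp [G1, hf_neg, gf_neg]; ring

lemma arbFree_mp (γ b ρ μ σ : ℝ) :
    ArbitrageFree γ b ρ μ σ → ArbitrageFree γ b (-ρ) (-μ) σ := by
  rintro ⟨hF, hG⟩
  constructor
  · intro l
    have h1 := hF (-l)
    have e1 : hf γ (-ρ) (-μ) l = hf γ ρ μ (-l) := by
      rw [← hf_neg γ ρ μ (-l)]; simp
    have e2 : gf (-ρ) l = -gf ρ (-l) := by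
      rw [← gf_neg ρ (-l)]; simp
    rw [e1, e2]
    constructor <;> linarith [h1.1, h1.2]
  · intro l
    have h2 := hG (-l)
    have e3 : G1 γ b (-ρ) (-μ) l = G1 γ b ρ μ (-l) := by
      rw [← G1_neg γ b ρ μ (-l)]; simp
    have e4 : g2 γ (-ρ) l = g2 γ ρ (-l) := by
      rw [← g2_neg γ ρ (-l)]; simp
    rw [e3, e4]; exact h2

/-- absence of Butterfly arbitrage for the inverse SVI:
(γ, b, ρ, μ, σ) is arbitrage-free iff (γ, b, −ρ, −μ, σ) is. -/
theorem arbitrageFree_inverse_svi (γ b ρ μ σ : ℝ) (hb : 0 < b)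
    (hρ : ρ ∈ Set.Icc (-1 : ℝ) 1) (hσ : 0 < σ)
    (hγ : 0 ≤ γ + Real.sqrt (1 - ρ ^ 2)) :
    ArbitrageFree γ b ρ μ σ ↔ ArbitrageFree γ b (-ρ) (-μ) σ := by
  constructor
  · exact arbFree_mp γ b ρ μ σ
  · intro h
    have := arbFree_mp γ b (-ρ) (-μ) σ h
    simpa using this
end

section
/- Let a, a* ∈ ℝ, b, b* > 0, ρ, ρ* ∈ [−1,1], m, m* ∈ ℝ, σ, σ* > 0. If for every k ∈ ℝ one has a + b·(ρ·(k−m) + √((k−m)² + σ²)) = a* + b*·(ρ*·(−k−m*) + √((k+m*)² + σ*²)), then a* = a, b* = b, ρ* = −ρ, m* = −m and σ* = σ. -/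
open Filter Topology

/-- √((k-m)² + σ²) - (k-m) → 0 as k → ∞. -/
lemma sqrt_sub_linear_tendsto (m σ : ℝ) (hσ : 0 < σ) :
    Tendsto (fun k => Real.sqrt ((k - m) ^ 2 + σ ^ 2) - (k - m)) atTop (𝓝 0) := by
  have hlim : Tendsto (fun k : ℝ => σ ^ 2 / (2 * (k - m))) atTop (𝓝 0) := by
    apply Tendsto.div_atTop (tendsto_const_nhds)
    apply Tendsto.const_mul_atTop (by norm_num : (0:ℝ) < 2)
    exact tendsto_atTop_add_const_right _ (-m) tendsto_id
  apply squeeze_zero' ?_ ?_ hlim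
  · filter_upwards [eventually_ge_atTop m] with k hk
    have h0 : 0 ≤ k - m := by linarith
    have h1 : Real.sqrt ((k - m) ^ 2) ≤ Real.sqrt ((k - m) ^ 2 + σ ^ 2) :=
      Real.sqrt_le_sqrt (by nlinarith)
    rw [Real.sqrt_sq h0] at h1
    linarith
  · filter_upwards [eventually_gt_atTop m] with k hk
    have hx : 0 < k - m := by linarith
    set t := σ ^ 2 / (2 * (k - m)) with ht
    have htv : 2 * (k - m) * t = σ ^ 2 := by
      rw [ht]; field_simp
    have ht0 : 0 ≤ t := by positivity
    have h1 : Real.sqrt ((k - m) ^ 2 + σ ^ 2) ≤ (k - m) + t := by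
      have h2 : (k - m) ^ 2 + σ ^ 2 ≤ ((k - m) + t) ^ 2 := by nlinarith
      calc Real.sqrt ((k - m) ^ 2 + σ ^ 2) ≤ Real.sqrt (((k - m) + t) ^ 2) :=
            Real.sqrt_le_sqrt h2
        _ = (k - m) + t := Real.sqrt_sq (by linarith)
    linarith

/-- A linear function tending to a finite limit has zero slope and constant = limit. -/
lemma linear_tendsto_nhds {c d L : ℝ}
    (h : Tendsto (fun k : ℝ => c * k + d) atTop (𝓝 L)) : c = 0 ∧ d = L := by
  have hc : c = 0 := by
    by_contra hc
    rcases lt_or_gt_of_ne hc with hneg | hpos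
    · have : Tendsto (fun k : ℝ => c * k + d) atTop atBot := by
        apply tendsto_atBot_add_const_right
        exact Tendsto.const_mul_atTop_of_neg hneg tendsto_id
      exact not_tendsto_atBot_of_tendsto_nhds h this
    · have : Tendsto (fun k : ℝ => c * k + d) atTop atTop := by
        apply tendsto_atTop_add_const_right
        exact Tendsto.const_mul_atTop hpos tendsto_id
      exact not_tendsto_atTop_of_tendsto_nhds h this
  subst hc
  simp only [zero_mul, zero_add] at h
  exact ⟨rfl, tendsto_nhds_unique tendsto_const_nhds h⟩

/-- identification of the raw SVI parameters of the inverse smile. -/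
theorem inverse_svi_parameters
    (a a' b b' ρ ρ' m m' σ σ' : ℝ) (hb : 0 < b) (hb' : 0 < b')
    (hρ : ρ ∈ Set.Icc (-1 : ℝ) 1) (hρ' : ρ' ∈ Set.Icc (-1 : ℝ) 1)
    (hσ : 0 < σ) (hσ' : 0 < σ')
    (heq : ∀ k : ℝ,
      a + b * (ρ * (k - m) + Real.sqrt ((k - m) ^ 2 + σ ^ 2))
        = a' + b' * (ρ' * (-k - m') + Real.sqrt ((k + m') ^ 2 + σ' ^ 2))) :
    a' = a ∧ b' = b ∧ ρ' = -ρ ∧ m' = -m ∧ σ' = σ := by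
  set α : ℝ := a' - a - b' * ρ' * m' + b * ρ * m with hα
  set β : ℝ := -(b' * ρ') - b * ρ with hβ
  have key : ∀ k : ℝ, b * Real.sqrt ((k - m) ^ 2 + σ ^ 2)
      - b' * Real.sqrt ((k + m') ^ 2 + σ' ^ 2) = α + β * k := by
    intro k
    have h := heq k
    rw [hα, hβ]
    linear_combination h
  -- behaviour at +∞
  have hu : Tendsto (fun k => Real.sqrt ((k - m) ^ 2 + σ ^ 2) - (k - m)) atTop (𝓝 0) :=
    sqrt_sub_linear_tendsto m σ hσ
  have hv : Tendsto (fun k => Real.sqrt ((k + m') ^ 2 + σ' ^ 2) - (k + m')) atTop (𝓝 0) := by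
    have := sqrt_sub_linear_tendsto (-m') σ' hσ'
    simpa [sub_neg_eq_add] using this
  have htop : Tendsto (fun k : ℝ =>
      (β - (b - b')) * k + (α + b * m + b' * m')) atTop (𝓝 0) := by
    have h1 : Tendsto (fun k : ℝ =>
        b * (Real.sqrt ((k - m) ^ 2 + σ ^ 2) - (k - m))
          - b' * (Real.sqrt ((k + m') ^ 2 + σ' ^ 2) - (k + m'))) atTop (𝓝 0) := by
      have := (hu.const_mul b).sub (hv.const_mul b')
      simpa using this
    have heqf : (fun k : ℝ => (β - (b - b')) * k + (α + b * m + b' * m'))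
        = fun k : ℝ => b * (Real.sqrt ((k - m) ^ 2 + σ ^ 2) - (k - m))
          - b' * (Real.sqrt ((k + m') ^ 2 + σ' ^ 2) - (k + m')) := by
      funext k
      have := key k
      ring_nf
      ring_nf at this
      linarith
    rw [heqf]
    exact h1
  obtain ⟨hc1, hd1⟩ := linear_tendsto_nhds htop
  -- behaviour at -∞ via k ↦ -k
  have hu' : Tendsto (fun k => Real.sqrt ((k + m) ^ 2 + σ ^ 2) - (k + m)) atTop (𝓝 0) := by
    have := sqrt_sub_linear_tendsto (-m) σ hσ
    simpa [sub_neg_eq_add] using this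
  have hv' : Tendsto (fun k => Real.sqrt ((k - m') ^ 2 + σ' ^ 2) - (k - m')) atTop (𝓝 0) :=
    sqrt_sub_linear_tendsto m' σ' hσ'
  have hbot : Tendsto (fun k : ℝ =>
      (-β - (b - b')) * k + (α - b * m - b' * m')) atTop (𝓝 0) := by
    have h1 : Tendsto (fun k : ℝ =>
        b * (Real.sqrt ((k + m) ^ 2 + σ ^ 2) - (k + m))
          - b' * (Real.sqrt ((k - m') ^ 2 + σ' ^ 2) - (k - m'))) atTop (𝓝 0) := by
      have := (hu'.const_mul b).sub (hv'.const_mul b')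
      simpa using this
    have heqf : (fun k : ℝ => (-β - (b - b')) * k + (α - b * m - b' * m'))
        = fun k : ℝ => b * (Real.sqrt ((k + m) ^ 2 + σ ^ 2) - (k + m))
          - b' * (Real.sqrt ((k - m') ^ 2 + σ' ^ 2) - (k - m')) := by
      funext k
      have h := key (-k)
      have e1 : (-k - m) ^ 2 = (k + m) ^ 2 := by ring
      have e2 : (-k + m') ^ 2 = (k - m') ^ 2 := by ring
      rw [e1, e2] at h
      ring_nf
      ring_nf at h
      linarith
    rw [heqf]
    exact h1
  obtain ⟨hc2, hd2⟩ := linear_tendsto_nhds hbot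
  -- extract parameter identities
  have hbb : b' = b := by linarith
  have hβ0 : β = 0 := by linarith
  have hmm : m' = -m := by
    have h1 : b * m + b' * m' = 0 := by linarith
    rw [hbb] at h1
    have h2 : b * m' = b * (-m) := by linear_combination h1
    exact mul_left_cancel₀ hb.ne' h2
  have hρρ : ρ' = -ρ := by
    have h1 : -(b' * ρ') - b * ρ = 0 := by rw [← hβ]; exact hβ0
    rw [hbb] at h1
    have h2 : b * ρ' = b * (-ρ) := by linear_combination -h1
    exact mul_left_cancel₀ hb.ne' h2
  have hα0 : α = 0 := by linarith
  have haa : a' = a := by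
    have h1 : a' - a - b' * ρ' * m' + b * ρ * m = 0 := by rw [← hα]; exact hα0
    rw [hbb, hρρ, hmm] at h1
    nlinarith
  have hσσ : σ' = σ := by
    have h := key m
    rw [hα0, hβ0, hmm] at h
    have e1 : (m - m) ^ 2 + σ ^ 2 = σ ^ 2 := by ring
    have e2 : (m + -m) ^ 2 + σ' ^ 2 = σ' ^ 2 := by ring
    rw [e1, e2, Real.sqrt_sq hσ.le, Real.sqrt_sq hσ'.le] at h
    rw [hbb] at h
    nlinarith
  exact ⟨haa, hbb, hρρ, hmm, hσσ⟩
end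

section
/- (No arbitrage sub-domain for the Vanishing Upward SVI.) Let γ = 0, ρ = 1, 0 < b < 1, μ ≤ 0 and σ ≥ (34√2 − 5√5)·b / (54·(1 − b²)). Then the Vanishing Upward SVI with these parameters is arbitrage-free. -/
/-! With `γ = 0`, `ρ = 1` and `s = √(l² + 1) > |l|`, all the functions are rational in `l` and `s`:
`h ± b·g = (4s − 2(l + μ) ± b(s + l)) / (4s)` and `g₂ = (2 − s² − ls) / (2s³)`. Hence the
Fukasawa factors are positive once `|b| ≤ 1` and `μ ≤ 0`. Clearing denominators, the Butterfly
condition becomes `8b(s² + ls − 2) ≤ 2σs((4s − 2(l + μ))² − b²(s + l)²)`. The bracket is at least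
`4(1 − b²)(2s − l)²`, and on the hyperbola `s² = l² + 1` one has `s² + ls − 2 ≤ (3/5)·s(2s − l)²`
(the best constant is about `0.548`), so `σ(1 − b²) ≥ (3/5)·b` suffices. The paper's constant
`(34√2 − 5√5)/54 ≈ 0.683` exceeds `3/5`. -/

open Real

lemma abs_lt_sqrt_sq_add_one (l : ℝ) : |l| < √(l ^ 2 + 1) :=
  (lt_sqrt (abs_nonneg l)).2 (by rw [sq_abs]; linarith)

lemma Nf''_eq_one_div_sqrt_pow_three (l : ℝ) : Nf'' l = 1 / √(l ^ 2 + 1) ^ 3 := by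
  have h : (0 : ℝ) ≤ l ^ 2 + 1 := by positivity
  rw [Nf'', sqrt_eq_rpow, ← rpow_natCast ((l ^ 2 + 1) ^ (1 / 2 : ℝ)) 3, ← rpow_mul h, one_div,
    ← rpow_neg h]
  norm_num

section VanishingUpward

variable (μ l : ℝ)

lemma hf_add_mul_gf_vanishingUpward (c : ℝ) :
    hf 0 1 μ l + c * gf 1 l =
      (4 * √(l ^ 2 + 1) - 2 * (l + μ) + c * (√(l ^ 2 + 1) + l)) / (4 * √(l ^ 2 + 1)) := by
  obtain ⟨hl₁, hl₂⟩ := abs_lt.1 (abs_lt_sqrt_sq_add_one l)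
  have hs : √(l ^ 2 + 1) ≠ 0 := by linarith
  have hN : l + √(l ^ 2 + 1) ≠ 0 := by linarith
  simp only [hf, gf, Nf, Nf', zero_add, one_mul]
  field_simp
  ring

lemma G1_vanishingUpward (b : ℝ) :
    G1 0 b 1 μ l = ((4 * √(l ^ 2 + 1) - 2 * (l + μ)) ^ 2 - b ^ 2 * (√(l ^ 2 + 1) + l) ^ 2) /
      (16 * √(l ^ 2 + 1) ^ 2) := by
  have hs : √(l ^ 2 + 1) ≠ 0 := (sqrt_pos.2 (by positivity)).ne'
  rw [G1, sub_eq_add_neg, ← neg_mul, hf_add_mul_gf_vanishingUpward,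
    hf_add_mul_gf_vanishingUpward]
  field_simp
  ring

lemma g2_vanishingUpward :
    g2 0 1 l = (2 - √(l ^ 2 + 1) ^ 2 - l * √(l ^ 2 + 1)) / (2 * √(l ^ 2 + 1) ^ 3) := by
  obtain ⟨hl₁, hl₂⟩ := abs_lt.1 (abs_lt_sqrt_sq_add_one l)
  have hs : √(l ^ 2 + 1) ≠ 0 := by linarith
  have hN : l + √(l ^ 2 + 1) ≠ 0 := by linarith
  simp only [g2, Nf''_eq_one_div_sqrt_pow_three, Nf, Nf', zero_add, one_mul]
  field_simp
  ring

end VanishingUpward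

lemma fukasawaCond_vanishingUpward {b μ : ℝ} (hb : |b| ≤ 1) (hμ : μ ≤ 0) :
    FukasawaCond 0 b 1 μ := by
  intro l
  obtain ⟨hl₁, hl₂⟩ := abs_lt.1 (abs_lt_sqrt_sq_add_one l)
  obtain ⟨hb₁, hb₂⟩ := abs_le.1 hb
  have key : ∀ c, -1 ≤ c → 0 < hf 0 1 μ l + c * gf 1 l := fun c hc => by
    rw [hf_add_mul_gf_vanishingUpward]
    refine div_pos ?_ (by positivity)
    nlinarith [mul_le_mul_of_nonneg_right hc (by linarith : 0 ≤ √(l ^ 2 + 1) + l)]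
  refine ⟨?_, key b hb₁⟩
  simpa only [neg_mul, ← sub_eq_add_neg] using key (-b) (by linarith)

lemma four_mul_one_sub_sq_mul_sq_le {b μ l s : ℝ} (hμ : μ ≤ 0) (hl : |l| ≤ s) :
    4 * (1 - b ^ 2) * (2 * s - l) ^ 2 ≤ (4 * s - 2 * (l + μ)) ^ 2 - b ^ 2 * (s + l) ^ 2 := by
  obtain ⟨hl₁, hl₂⟩ := abs_le.1 hl
  nlinarith [mul_nonneg (sq_nonneg b) (mul_nonneg (sub_nonneg.2 hl₂) (by linarith : 0 ≤ 5 * s - l)),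
    mul_nonneg (neg_nonneg.2 hμ) (by linarith : 0 ≤ 8 * s - 4 * l - 2 * μ)]

lemma sq_add_mul_sub_two_le {l s : ℝ} (hs₀ : 0 ≤ s) (hs : s ^ 2 = l ^ 2 + 1) :
    s ^ 2 + l * s - 2 ≤ 3 / 5 * (s * (2 * s - l) ^ 2) := by
  nlinarith [sq_nonneg (s - l), sq_nonneg (l - 2)]

lemma butterfly_numerator_le {b μ σ l s : ℝ} (hb : 0 ≤ b) (hσ : 0 ≤ σ)
    (hσb : 3 / 5 * b ≤ σ * (1 - b ^ 2)) (hμ : μ ≤ 0) (hs₀ : 0 ≤ s) (hs : s ^ 2 = l ^ 2 + 1) :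
    8 * b * (s ^ 2 + l * s - 2) ≤
      2 * σ * s * ((4 * s - 2 * (l + μ)) ^ 2 - b ^ 2 * (s + l) ^ 2) := by
  have hl : |l| ≤ s := abs_le_of_sq_le_sq (by rw [hs]; linarith) hs₀
  calc 8 * b * (s ^ 2 + l * s - 2)
      ≤ 8 * b * (3 / 5 * (s * (2 * s - l) ^ 2)) := by
        gcongr; exact sq_add_mul_sub_two_le hs₀ hs
    _ = 8 * (3 / 5 * b) * (s * (2 * s - l) ^ 2) := by ring
    _ ≤ 8 * (σ * (1 - b ^ 2)) * (s * (2 * s - l) ^ 2) := by gcongr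
    _ = 2 * σ * s * (4 * (1 - b ^ 2) * (2 * s - l) ^ 2) := by ring
    _ ≤ 2 * σ * s * ((4 * s - 2 * (l + μ)) ^ 2 - b ^ 2 * (s + l) ^ 2) := by
        gcongr; exact four_mul_one_sub_sq_mul_sq_le hμ hl

theorem arbitrageFree_vanishingUpward {b μ σ : ℝ} (hb : 0 ≤ b) (hb₁ : b ≤ 1) (hμ : μ ≤ 0)
    (hσ : 0 < σ) (hσb : 3 / 5 * b ≤ σ * (1 - b ^ 2)) : ArbitrageFree 0 b 1 μ σ := by
  refine ⟨fukasawaCond_vanishingUpward (abs_le.2 ⟨by linarith, hb₁⟩) hμ, fun l => ?_⟩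
  set s := √(l ^ 2 + 1)
  have hs₀ : 0 < s := sqrt_pos.2 (by positivity)
  have hs : s ^ 2 = l ^ 2 + 1 := sq_sqrt (by positivity)
  have h : G1 0 b 1 μ l + b / (2 * σ) * g2 0 1 l =
      (2 * σ * s * ((4 * s - 2 * (l + μ)) ^ 2 - b ^ 2 * (s + l) ^ 2) -
        8 * b * (s ^ 2 + l * s - 2)) / (32 * σ * s ^ 3) := by
    rw [G1_vanishingUpward, g2_vanishingUpward]
    field_simp
    ring
  rw [h]
  exact div_nonneg (sub_nonneg.2 (butterfly_numerator_le hb hσ.le hσb hμ hs₀.le hs))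
    (by positivity)

/-- explicit no-arbitrage sub-domain for the Vanishing Upward SVI. -/
theorem vanishing_upward_subdomain (b μ σ : ℝ) (hb : 0 < b) (hb1 : b < 1)
    (hμ : μ ≤ 0)
    (hσ : σ ≥ (34 * Real.sqrt 2 - 5 * Real.sqrt 5) * b / (54 * (1 - b ^ 2))) :
    ArbitrageFree 0 b 1 μ σ := by
  have hc : 3 / 5 < (34 * √2 - 5 * √5) / 54 := by
    have h₂ : (1.41 : ℝ) ≤ √2 := (le_sqrt' (by norm_num)).2 (by norm_num)
    have h₅ : √5 ≤ 2.24 := (sqrt_le_left (by norm_num)).2 (by norm_num)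
    rw [lt_div_iff₀ (by norm_num)]
    linarith
  have hb₂ : 0 < 54 * (1 - b ^ 2) := by nlinarith
  have hσb : 54 * (3 / 5) * b ≤ σ * (54 * (1 - b ^ 2)) := by
    nlinarith [(div_le_iff₀ hb₂).1 hσ]
  refine arbitrageFree_vanishingUpward hb.le hb1.le hμ ?_ (by linarith)
  nlinarith
end

section
/- (Fully explicit no arbitrage domain for the Extremal Decorrelated SVI.) Let ρ = 0, b = 2 and γ > −1. Then the Extremal Decorrelated SVI is arbitrage-free if and only if γ > 0, |μ| < γ and σ ≥ 1/(γ − |μ|); equivalently, writing μ = q·γ with q ∈ (−1, 1), if and only if γ > 0 and σ ≥ 1/(γ·(1−|q|)). -/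
/-!
Put `x = √(l²+1) − l`, so that `l = (1 − x²)/(2x)` and `√(l²+1) = (1 + x²)/(2x)` with `x`
ranging over `(0, ∞)`. Then both Fukasawa factors and `G₁ + (1/σ)·g₂` become rational functions
of `x` with positive denominators. The Fukasawa numerators are cubics with coefficients
`γ − μ, 3γ ± μ, γ + μ`, positive as soon as `|μ| < γ`. The butterfly numerator `P` is a
polynomial with `P(0) = γ − μ − 1/σ`, and the reflection `x ↦ 1/x` (that is, `l ↦ −l`) turns it
into the same polynomial with `−μ`; so `P ≥ 0` on `(0, ∞)` forces `|μ| ≤ γ − 1/σ`. Conversely,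
writing `γ = 1/σ + p + r` and `μ = r − p` with `p, r ≥ 0` makes every coefficient of `P`
nonnegative.
-/

open Set

noncomputable def lParam (x : ℝ) : ℝ := (1 - x ^ 2) / (2 * x)

lemma sqrt_lParam_sq_add_one {x : ℝ} (hx : 0 < x) :
    Real.sqrt (lParam x ^ 2 + 1) = (1 + x ^ 2) / (2 * x) := by
  rw [show lParam x ^ 2 + 1 = ((1 + x ^ 2) / (2 * x)) ^ 2 by unfold lParam; field_simp; ring]
  exact Real.sqrt_sq (by positivity)

lemma forall_lParam {P : ℝ → Prop} : (∀ l, P l) ↔ ∀ x > 0, P (lParam x) := by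
  refine ⟨fun h x _ => h _, fun h l => ?_⟩
  have hs : Real.sqrt (l ^ 2 + 1) ^ 2 = l ^ 2 + 1 := Real.sq_sqrt (by positivity)
  have hl : l < Real.sqrt (l ^ 2 + 1) := by nlinarith [Real.sqrt_nonneg (l ^ 2 + 1)]
  convert h (Real.sqrt (l ^ 2 + 1) - l) (sub_pos.2 hl)
  unfold lParam
  rw [eq_div_iff (by linarith)]
  linear_combination hs

lemma Nf''_eq (l : ℝ) : Nf'' l = (Real.sqrt (l ^ 2 + 1) ^ 3)⁻¹ := by
  rw [Nf'', Real.sqrt_eq_rpow, ← Real.rpow_mul_natCast (by positivity),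
    ← Real.rpow_neg (by positivity)]
  norm_num

def NfNum (γ x : ℝ) : ℝ := x ^ 2 + 1 + 2 * γ * x

lemma NfNum_pos {γ x : ℝ} (hγ : -1 < γ) (hx : 0 < x) : 0 < NfNum γ x := by
  unfold NfNum; nlinarith [sq_nonneg (x - 1)]

lemma Nf_zero_lParam (γ : ℝ) {x : ℝ} (hx : 0 < x) :
    Nf γ 0 (lParam x) = NfNum γ x / (2 * x) := by
  rw [Nf, sqrt_lParam_sq_add_one hx, NfNum]; field_simp; ring

lemma Nf'_zero_lParam {x : ℝ} (hx : 0 < x) : Nf' 0 (lParam x) = (1 - x ^ 2) / (1 + x ^ 2) := by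
  rw [Nf', sqrt_lParam_sq_add_one hx, lParam]; field_simp; ring

lemma Nf''_lParam {x : ℝ} (hx : 0 < x) : Nf'' (lParam x) = (2 * x / (1 + x ^ 2)) ^ 3 := by
  rw [Nf''_eq, sqrt_lParam_sq_add_one hx]; field_simp

def fukasawaMinusNum (γ μ x : ℝ) : ℝ := γ - μ + 3 * x + (3 * γ + μ) * x ^ 2 + x ^ 3

def fukasawaPlusNum (γ μ x : ℝ) : ℝ := 1 + (3 * γ - μ) * x + 3 * x ^ 2 + (γ + μ) * x ^ 3

def g2Num (γ x : ℝ) : ℝ := 8 * x ^ 2 * NfNum γ x - (1 - x ^ 2) ^ 2 * (x ^ 2 + 1)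

def butterflyNum (γ μ t x : ℝ) : ℝ :=
  (x ^ 2 + 1) * fukasawaMinusNum γ μ x * fukasawaPlusNum γ μ x + t * NfNum γ x * g2Num γ x

lemma hf_sub_gf_lParam {γ x : ℝ} (μ : ℝ) (hx : 0 < x) (hN : NfNum γ x ≠ 0) :
    hf γ 0 μ (lParam x) - 2 * gf 0 (lParam x)
      = x * fukasawaMinusNum γ μ x / ((x ^ 2 + 1) * NfNum γ x) := by
  rw [hf, gf, Nf_zero_lParam γ hx, Nf'_zero_lParam hx, lParam, fukasawaMinusNum]
  field_simp
  unfold NfNum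
  ring

lemma hf_add_gf_lParam {γ x : ℝ} (μ : ℝ) (hx : 0 < x) (hN : NfNum γ x ≠ 0) :
    hf γ 0 μ (lParam x) + 2 * gf 0 (lParam x)
      = fukasawaPlusNum γ μ x / ((x ^ 2 + 1) * NfNum γ x) := by
  rw [hf, gf, Nf_zero_lParam γ hx, Nf'_zero_lParam hx, lParam, fukasawaPlusNum]
  field_simp
  unfold NfNum
  ring

lemma g2_lParam {γ x : ℝ} (hx : 0 < x) (hN : NfNum γ x ≠ 0) :
    g2 γ 0 (lParam x) = x * g2Num γ x / ((x ^ 2 + 1) ^ 3 * NfNum γ x) := by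
  rw [g2, Nf_zero_lParam γ hx, Nf'_zero_lParam hx, Nf''_lParam hx, g2Num]
  field_simp
  unfold NfNum
  ring

lemma G1_add_g2_lParam {γ x : ℝ} (μ t : ℝ) (hx : 0 < x) (hN : NfNum γ x ≠ 0) :
    G1 γ 2 0 μ (lParam x) + t * g2 γ 0 (lParam x)
      = x * butterflyNum γ μ t x / ((x ^ 2 + 1) ^ 3 * NfNum γ x ^ 2) := by
  rw [G1, hf_sub_gf_lParam μ hx hN, hf_add_gf_lParam μ hx hN, g2_lParam hx hN, butterflyNum]
  field_simp

lemma butterflyNum_nonneg {γ μ t x : ℝ} (hx : 0 ≤ x) (ht : 0 ≤ t) (hμ : |μ| ≤ γ - t) :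
    0 ≤ butterflyNum γ μ t x := by
  obtain ⟨p, r, hp, hr, rfl, rfl⟩ : ∃ p r, 0 ≤ p ∧ 0 ≤ r ∧ γ = t + p + r ∧ μ = r - p := by
    refine ⟨(γ - t - μ) / 2, (γ - t + μ) / 2, ?_, ?_, by ring, by ring⟩ <;>
      linarith [abs_le.1 hμ]
  unfold butterflyNum fukasawaMinusNum fukasawaPlusNum g2Num NfNum
  ring_nf
  positivity

lemma fukasawaMinusNum_pos {γ μ x : ℝ} (hx : 0 ≤ x) (hμ : |μ| < γ) :
    0 < fukasawaMinusNum γ μ x := by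
  have h₁ : 0 < γ - μ := by linarith [abs_lt.1 hμ]
  have h₂ : 0 < 3 * γ + μ := by linarith [abs_lt.1 hμ]
  unfold fukasawaMinusNum
  positivity

lemma fukasawaPlusNum_pos {γ μ x : ℝ} (hx : 0 ≤ x) (hμ : |μ| < γ) :
    0 < fukasawaPlusNum γ μ x := by
  have h₁ : 0 < 3 * γ - μ := by linarith [abs_lt.1 hμ]
  have h₂ : 0 < γ + μ := by linarith [abs_lt.1 hμ]
  unfold fukasawaPlusNum
  positivity

lemma butterflyNum_inv {γ μ t x : ℝ} (hx : x ≠ 0) :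
    x ^ 8 * butterflyNum γ μ t x⁻¹ = butterflyNum γ (-μ) t x := by
  unfold butterflyNum fukasawaMinusNum fukasawaPlusNum g2Num NfNum
  field_simp
  ring

lemma sub_le_of_forall_pos_butterflyNum_nonneg {γ μ t : ℝ}
    (h : ∀ x > 0, 0 ≤ butterflyNum γ μ t x) : t ≤ γ - μ := by
  have hcont : Continuous (butterflyNum γ μ t) := by
    unfold butterflyNum fukasawaMinusNum fukasawaPlusNum g2Num NfNum
    fun_prop
  have h₀ : 0 ≤ butterflyNum γ μ t 0 :=
    (isClosed_le continuous_const hcont).closure_subset_iff.2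
      (fun x (hx : x ∈ Ioi 0) => h x hx) (by rw [closure_Ioi]; exact self_mem_Ici)
  norm_num [butterflyNum, fukasawaMinusNum, fukasawaPlusNum, g2Num, NfNum] at h₀
  linarith

lemma forall_pos_butterflyNum_nonneg_iff {γ μ t : ℝ} (ht : 0 ≤ t) :
    (∀ x > 0, 0 ≤ butterflyNum γ μ t x) ↔ |μ| ≤ γ - t := by
  refine ⟨fun h => abs_le.2 ⟨?_, ?_⟩, fun h x hx => butterflyNum_nonneg hx.le ht h⟩
  · have := sub_le_of_forall_pos_butterflyNum_nonneg (μ := -μ) fun x hx => by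
      rw [← butterflyNum_inv hx.ne']
      exact mul_nonneg (by positivity) (h _ (inv_pos.2 hx))
    linarith
  · linarith [sub_le_of_forall_pos_butterflyNum_nonneg h]

lemma fukasawaCond_iff {γ μ : ℝ} (hγ : -1 < γ) :
    FukasawaCond γ 2 0 μ ↔
      ∀ x > 0, 0 < fukasawaMinusNum γ μ x ∧ 0 < fukasawaPlusNum γ μ x := by
  rw [FukasawaCond, forall_lParam]
  refine forall₂_congr fun x hx => ?_
  have hN := NfNum_pos hγ hx
  have hden : 0 < (x ^ 2 + 1) * NfNum γ x := by positivity
  rw [hf_sub_gf_lParam μ hx hN.ne', hf_add_gf_lParam μ hx hN.ne', div_pos_iff_of_pos_right hden,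
    div_pos_iff_of_pos_right hden, mul_pos_iff_of_pos_left hx]

lemma forall_G1_add_g2_nonneg_iff {γ : ℝ} (μ t : ℝ) (hγ : -1 < γ) :
    (∀ l, 0 ≤ G1 γ 2 0 μ l + t * g2 γ 0 l) ↔ ∀ x > 0, 0 ≤ butterflyNum γ μ t x := by
  rw [forall_lParam]
  refine forall₂_congr fun x hx => ?_
  have hN := NfNum_pos hγ hx
  rw [G1_add_g2_lParam μ t hx hN.ne', le_div_iff₀ (by positivity), zero_mul,
    mul_nonneg_iff_of_pos_left hx]

lemma arbitrageFree_iff_abs_le {γ μ σ : ℝ} (hγ : -1 < γ) (hσ : 0 < σ) :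
    ArbitrageFree γ 2 0 μ σ ↔ |μ| ≤ γ - σ⁻¹ := by
  rw [ArbitrageFree, fukasawaCond_iff hγ, div_mul_cancel_left₀ two_ne_zero,
    forall_G1_add_g2_nonneg_iff μ _ hγ, forall_pos_butterflyNum_nonneg_iff (inv_nonneg.2 hσ.le)]
  refine and_iff_right_of_imp fun h x hx => ?_
  have hμ : |μ| < γ := by linarith [inv_pos.2 hσ]
  exact ⟨fukasawaMinusNum_pos hx.le hμ, fukasawaPlusNum_pos hx.le hμ⟩

lemma abs_le_sub_inv_iff {γ μ σ : ℝ} (hσ : 0 < σ) :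
    |μ| ≤ γ - σ⁻¹ ↔ 0 < γ ∧ |μ| < γ ∧ σ ≥ 1 / (γ - |μ|) := by
  constructor
  · intro h
    have hpos : 0 < γ - |μ| := by linarith [inv_pos.2 hσ]
    refine ⟨by linarith [abs_nonneg μ], by linarith, ?_⟩
    rw [ge_iff_le, one_div, inv_le_comm₀ hpos hσ]
    linarith
  · rintro ⟨-, hμ, hσμ⟩
    rw [ge_iff_le, one_div, inv_le_comm₀ (sub_pos.2 hμ) hσ] at hσμ
    linarith

/-- fully explicit no-arbitrage domain for the Extremal Decorrelated SVI. -/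
theorem extremal_decorrelated_domain (γ μ σ : ℝ) (hγ : -1 < γ) (hσ : 0 < σ) :
    (ArbitrageFree γ 2 0 μ σ ↔ 0 < γ ∧ |μ| < γ ∧ σ ≥ 1 / (γ - |μ|)) ∧
    (∀ q ∈ Set.Ioo (-1 : ℝ) 1, μ = q * γ →
      (ArbitrageFree γ 2 0 μ σ ↔ 0 < γ ∧ σ ≥ 1 / (γ * (1 - |q|)))) := by
  have hdomain : ArbitrageFree γ 2 0 μ σ ↔ 0 < γ ∧ |μ| < γ ∧ σ ≥ 1 / (γ - |μ|) :=
    (arbitrageFree_iff_abs_le hγ hσ).trans (abs_le_sub_inv_iff hσ)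
  refine ⟨hdomain, ?_⟩
  rintro q ⟨hq₁, hq₂⟩ rfl
  rw [hdomain]
  refine and_congr_right fun hγ₀ => ?_
  rw [abs_mul, abs_of_pos hγ₀, show γ - |q| * γ = γ * (1 - |q|) by ring]
  exact and_iff_right (mul_lt_of_lt_one_left hγ₀ (abs_lt.2 ⟨hq₁, hq₂⟩))
end

section
/- (No arbitrage domain for the Symmetric SVI, b = 2.) Let ρ = 0, μ = 0, b = 2 and γ > −1. Then the Symmetric SVI is arbitrage-free if and only if γ > 0 and σ ≥ 1/γ. -/
/-!
With `s = √(l²+1)`, which ranges over `[1, ∞)`, clearing the positive denominator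
`4σs³(γ+s)²` turns `G₁ + g₂/σ` (for `b = 2`) into a quartic in `s` with leading coefficient
`2(σγ - 1)` whose other coefficients are nonnegative once `σγ ≥ 1`. Hence the quartic is
nonnegative on `[1, ∞)` exactly when `σγ ≥ 1`. The Fukasawa factors are positive for `γ ≥ 0`
because `|l| < s`.
-/

open Real

lemma rpow_neg_three_halves {x : ℝ} (hx : 0 ≤ x) : x ^ (-(3 : ℝ) / 2) = (√x ^ 3)⁻¹ := by
  rw [show -(3 : ℝ) / 2 = (1 / 2) * (-3 : ℤ) by norm_num, rpow_mul hx, ← sqrt_eq_rpow,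
    rpow_intCast, zpow_neg, zpow_ofNat]

lemma one_le_sqrt_sq_add_one (l : ℝ) : 1 ≤ √(l ^ 2 + 1) :=
  one_le_sqrt.2 (by nlinarith [sq_nonneg l])

lemma exists_sqrt_sq_add_one_eq {s : ℝ} (hs : 1 ≤ s) : ∃ l : ℝ, √(l ^ 2 + 1) = s :=
  ⟨√(s ^ 2 - 1), by
    rw [sq_sqrt (by nlinarith), sub_add_cancel, sqrt_sq (by linarith)]⟩

lemma exists_quartic_neg {a b c d e : ℝ} (ha : a < 0) :
    ∃ s ≥ 1, a * s ^ 4 + b * s ^ 3 + c * s ^ 2 + d * s + e < 0 := by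
  set M := |b| + |c| + |d| + |e|
  have hM : 0 ≤ M := by positivity
  have hs : 1 ≤ 1 + M / -a := le_add_of_nonneg_right (div_nonneg hM (by linarith))
  refine ⟨_, hs, ?_⟩
  set s := 1 + M / -a
  have has : a * s + M = a := by
    have : a ≠ 0 := ha.ne
    simp only [s]
    field_simp
    ring
  have hlower : b * s ^ 3 + c * s ^ 2 + d * s + e ≤ M * s ^ 3 := by
    have h2 : s ^ 2 ≤ s ^ 3 := pow_le_pow_right₀ hs (by norm_num)
    have h1 : s ≤ s ^ 3 := le_self_pow₀ hs (by norm_num)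
    have h0 : 1 ≤ s ^ 3 := one_le_pow₀ hs
    nlinarith [mul_le_mul_of_nonneg_right (le_abs_self b) (by positivity : (0 : ℝ) ≤ s ^ 3),
      mul_le_mul_of_nonneg_right (le_abs_self c) (by positivity : (0 : ℝ) ≤ s ^ 2),
      mul_le_mul_of_nonneg_right (le_abs_self d) (by positivity : (0 : ℝ) ≤ s),
      le_abs_self e, mul_le_mul_of_nonneg_left h2 (abs_nonneg c),
      mul_le_mul_of_nonneg_left h1 (abs_nonneg d), mul_le_mul_of_nonneg_left h0 (abs_nonneg e)]
  have hcube : 0 < s ^ 3 := by positivity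
  calc a * s ^ 4 + b * s ^ 3 + c * s ^ 2 + d * s + e
      ≤ (a * s + M) * s ^ 3 := by linarith
    _ = a * s ^ 3 := by rw [has]
    _ < 0 := mul_neg_of_neg_of_pos ha hcube

lemma hf_add_mul_gf_symm {γ : ℝ} (hγ : -1 < γ) (b l : ℝ) :
    hf γ 0 0 l + b * gf 0 l =
      (2 * √(l ^ 2 + 1) ^ 2 + 4 * γ * √(l ^ 2 + 1) + 2 + b * l * (γ + √(l ^ 2 + 1)))
        / (4 * √(l ^ 2 + 1) * (γ + √(l ^ 2 + 1))) := by
  have hs1 := one_le_sqrt_sq_add_one l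
  have hs2 : √(l ^ 2 + 1) ^ 2 = l ^ 2 + 1 := sq_sqrt (by positivity)
  have hs0 : √(l ^ 2 + 1) ≠ 0 := by positivity
  have hN : γ + √(l ^ 2 + 1) ≠ 0 := by linarith
  simp only [hf, gf, Nf, Nf', zero_mul, zero_add, add_zero]
  field_simp
  linear_combination 4 * hs2

lemma fukasawaCond_symm {γ b : ℝ} (hγ : 0 ≤ γ) (hb : |b| ≤ 2) : FukasawaCond γ b 0 0 := by
  intro l
  have hl := abs_lt_sqrt_sq_add_one l
  set s := √(l ^ 2 + 1)
  have hs1 : 1 ≤ s := one_le_sqrt_sq_add_one l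
  have hpos (t : ℝ) (ht : |t| ≤ 2) : 0 < hf γ 0 0 l + t * gf 0 l := by
    rw [hf_add_mul_gf_symm (by linarith) t l]
    -- `|t l| ≤ 2s`, so the numerator is at least `2s² + 4γs + 2 - 2s(γ + s) = 2γs + 2 > 0`.
    have htl : |t * l| ≤ 2 * s := by
      rw [abs_mul]
      exact mul_le_mul ht hl.le (abs_nonneg l) (by norm_num)
    have hmul : -(2 * s) * (γ + s) ≤ t * l * (γ + s) :=
      mul_le_mul_of_nonneg_right (abs_le.1 htl).1 (by linarith)
    apply div_pos _ (by positivity)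
    nlinarith
  have hneg := hpos (-b) (by rwa [abs_neg])
  exact ⟨by linarith, hpos b hb⟩

def symmTwoNumerator (γ σ s : ℝ) : ℝ :=
  2 * (σ * γ - 1) * s ^ 4 + (3 * σ * γ ^ 2 + 3 * σ - 2 * γ) * s ^ 3 + (6 * σ * γ + 6) * s ^ 2
    + (σ + σ * γ ^ 2 + 10 * γ) * s + 4 * γ ^ 2

lemma G1_add_g2_symm_two {γ σ : ℝ} (hγ : -1 < γ) (hσ : σ ≠ 0) (l : ℝ) :
    G1 γ 2 0 0 l + 2 / (2 * σ) * g2 γ 0 l =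
      symmTwoNumerator γ σ √(l ^ 2 + 1)
        / (4 * σ * √(l ^ 2 + 1) ^ 3 * (γ + √(l ^ 2 + 1)) ^ 2) := by
  have hs1 := one_le_sqrt_sq_add_one l
  have hs2 : √(l ^ 2 + 1) ^ 2 = l ^ 2 + 1 := sq_sqrt (by positivity)
  have hs0 : √(l ^ 2 + 1) ≠ 0 := by positivity
  have hN : γ + √(l ^ 2 + 1) ≠ 0 := by linarith
  simp only [G1, hf, gf, g2, Nf, Nf', Nf'',
    rpow_neg_three_halves (by positivity : (0 : ℝ) ≤ l ^ 2 + 1), symmTwoNumerator, zero_mul, zero_add, add_zero]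
  field_simp
  set s := √(l ^ 2 + 1)
  linear_combination (16 * s * σ * (4 * s ^ 2 + 6 * γ * s + γ ^ 2 + 1 - l ^ 2)
    + 32 * s * γ + 32 * s ^ 2) * hs2

lemma G1_add_g2_symm_two_nonneg_iff {γ σ : ℝ} (hγ : -1 < γ) (hσ : 0 < σ) (l : ℝ) :
    0 ≤ G1 γ 2 0 0 l + 2 / (2 * σ) * g2 γ 0 l ↔ 0 ≤ symmTwoNumerator γ σ √(l ^ 2 + 1) := by
  have hs1 := one_le_sqrt_sq_add_one l
  have hden : 0 < 4 * σ * √(l ^ 2 + 1) ^ 3 * (γ + √(l ^ 2 + 1)) ^ 2 := by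
    have : 0 < γ + √(l ^ 2 + 1) := by linarith
    positivity
  rw [G1_add_g2_symm_two hγ hσ.ne', le_div_iff₀ hden, zero_mul]

lemma symmTwoNumerator_nonneg {γ σ s : ℝ} (hσγ : 1 ≤ σ * γ) (hγ : 0 < γ) (hs : 0 ≤ s) :
    0 ≤ symmTwoNumerator γ σ s := by
  have hσγ2 : γ ≤ σ * γ ^ 2 := by nlinarith
  have hσ : 0 < σ := pos_of_mul_pos_left (by linarith) hγ.le
  unfold symmTwoNumerator
  have := mul_nonneg (by linarith : 0 ≤ 2 * (σ * γ - 1)) (pow_nonneg hs 4)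
  have := mul_nonneg (by linarith : 0 ≤ 3 * σ * γ ^ 2 + 3 * σ - 2 * γ) (pow_nonneg hs 3)
  have := mul_nonneg (by linarith : 0 ≤ 6 * σ * γ + 6) (pow_nonneg hs 2)
  have := mul_nonneg (by nlinarith : 0 ≤ σ + σ * γ ^ 2 + 10 * γ) hs
  positivity

lemma pos_and_ge_one_div_iff {γ σ : ℝ} (hσ : 0 < σ) : 0 < γ ∧ σ ≥ 1 / γ ↔ 1 ≤ σ * γ := by
  constructor
  · rintro ⟨hγ, h⟩
    rwa [ge_iff_le, div_le_iff₀ hγ] at h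
  · intro h
    have hγ : 0 < γ := pos_of_mul_pos_right (by linarith) hσ.le
    exact ⟨hγ, by rwa [ge_iff_le, div_le_iff₀ hγ]⟩

/-- no-arbitrage domain for the Symmetric SVI with b = 2. -/
theorem symmetric_b_two (γ σ : ℝ) (hγ : -1 < γ) (hσ : 0 < σ) :
    ArbitrageFree γ 2 0 0 σ ↔ 0 < γ ∧ σ ≥ 1 / γ := by
  rw [pos_and_ge_one_div_iff hσ]
  constructor
  · rintro ⟨-, hG⟩
    by_contra! hσγ
    obtain ⟨s, hs, hneg⟩ := exists_quartic_neg (a := 2 * (σ * γ - 1))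
      (b := 3 * σ * γ ^ 2 + 3 * σ - 2 * γ) (c := 6 * σ * γ + 6)
      (d := σ + σ * γ ^ 2 + 10 * γ) (e := 4 * γ ^ 2) (by linarith)
    obtain ⟨l, rfl⟩ := exists_sqrt_sq_add_one_eq hs
    exact hneg.not_ge ((G1_add_g2_symm_two_nonneg_iff hγ hσ l).1 (hG l))
  · intro hσγ
    have hγ0 : 0 < γ := pos_of_mul_pos_right (by linarith) hσ.le
    refine ⟨fukasawaCond_symm hγ0.le (by norm_num), fun l => ?_⟩
    exact (G1_add_g2_symm_two_nonneg_iff hγ hσ l).2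
      (symmTwoNumerator_nonneg hσγ hγ0 (sqrt_nonneg _))
end

section
/- (No arbitrage domain for the Symmetric SVI at the exceptional level γ̂.) Let ρ = 0, μ = 0 and γ = −√((9 + 5√3)/18). Then the Symmetric SVI is arbitrage-free if and only if b < 2·√(3√3 − 5) and σ ≥ −b·g₂(l̂)/(2·G₁(l̂)), where l̂ = 3^(−1/4) (the point corresponding to ẑ = 1/√(l̂²+1) = √((3−√3)/2)). -/
/-!
Write `s = √(l² + 1) ≥ 1` and `A(s) = s² + 2γs + 1`. For the symmetric SVI the two Fukasawa
factors have positive sum `2h`, so the Fukasawa conditions say exactly that `G₁ > 0`, and `G₁`, `g₂`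
are explicit rational functions of `s`. At `γ̂` the quartic `A(s)² − (3√3 − 5)(s² − 1)(γ̂ + s)²` is
nonnegative on `s ≥ 1` and vanishes at `ŝ = √(l̂² + 1)`; hence `G₁ > 0` everywhere iff
`b² < 4(3√3 − 5)`.

The butterfly condition `G₁ + c·g₂ ≥ 0` with `c = b/(2σ)` is affine in `c` and holds at `c = 0`,
so it holds at every `l` as soon as it holds at `l̂`, provided `g₂(l̂)·G₁(l) ≤ G₁(l̂)·g₂(l)` for all
`l`. This cross inequality is affine in `b²`: at `b² = 4(3√3 − 5)` we have `G₁(l̂) = 0` and it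
reduces to the quartic above, and at `b = 0` it is a second polynomial inequality in `s`. Both
polynomial inequalities are certified by expansions in `(s − 1)ᵏ (s − ŝ)²` with coefficients in
`ℚ(√3, ŝ)`.
-/

lemma add_div_mul_nonneg_iff {σ G b g : ℝ} (hσ : 0 < σ) (hG : 0 < G) :
    0 ≤ G + b / (2 * σ) * g ↔ -(b * g) / (2 * G) ≤ σ := by
  have h : G + b / (2 * σ) * g = (σ * (2 * G) + b * g) / (2 * σ) := by
    field_simp
  rw [h, div_le_iff₀ (by positivity), le_div_iff₀ (by positivity)]
  constructor <;> intro h <;> linarith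

lemma add_mul_nonneg_of_mul_le_mul {G G' g g' c : ℝ} (hG : 0 ≤ G) (hG' : 0 < G') (hc : 0 ≤ c)
    (hcross : g' * G ≤ G' * g) (h : 0 ≤ G' + c * g') : 0 ≤ G + c * g := by
  refine nonneg_of_mul_nonneg_right ?_ hG'
  nlinarith [mul_nonneg hc (sub_nonneg.2 hcross), mul_nonneg hG h]

namespace SymmetricSVI

variable {γ b l s : ℝ}

lemma one_le_of_sqrt_eq (hs : √(l ^ 2 + 1) = s) : 1 ≤ s :=
  hs ▸ Real.one_le_sqrt.2 (by nlinarith [sq_nonneg l])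

lemma sq_of_sqrt_eq (hs : √(l ^ 2 + 1) = s) : l ^ 2 = s ^ 2 - 1 := by
  rw [← hs, Real.sq_sqrt (by positivity)]
  ring

lemma Nf''_eq (hs : √(l ^ 2 + 1) = s) : Nf'' l = (s ^ 3)⁻¹ := by
  rw [Nf'', ← hs, show -(3 : ℝ) / 2 = 1 / 2 * (-3 : ℤ) by norm_num,
    Real.rpow_mul (by positivity), ← Real.sqrt_eq_rpow, Real.rpow_intCast, zpow_neg]
  norm_cast

lemma hf_eq (hγ : -1 < γ) (hs : √(l ^ 2 + 1) = s) :
    hf γ 0 0 l = (s ^ 2 + 2 * γ * s + 1) / (2 * s * (γ + s)) := by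
  have hs1 := one_le_of_sqrt_eq hs
  have hC : γ + s ≠ 0 := by linarith
  rw [hf, Nf', Nf, hs]
  simp only [zero_add, add_zero, zero_mul]
  field_simp
  linear_combination -sq_of_sqrt_eq hs

lemma G1_eq (hγ : -1 < γ) (hs : √(l ^ 2 + 1) = s) :
    G1 γ b 0 0 l = (4 * (s ^ 2 + 2 * γ * s + 1) ^ 2 - b ^ 2 * (s ^ 2 - 1) * (γ + s) ^ 2)
      / (16 * s ^ 2 * (γ + s) ^ 2) := by
  have hs1 := one_le_of_sqrt_eq hs
  have hC : γ + s ≠ 0 := by linarith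
  rw [G1, hf_eq hγ hs, gf, Nf', hs, zero_add]
  field_simp
  linear_combination (-64 * b ^ 2 * (γ + s) ^ 2) * sq_of_sqrt_eq hs

lemma g2_eq (hγ : -1 < γ) (hs : √(l ^ 2 + 1) = s) :
    g2 γ 0 l = (-s ^ 3 + 3 * s + 2 * γ) / (2 * s ^ 3 * (γ + s)) := by
  have hs1 := one_le_of_sqrt_eq hs
  have hC : γ + s ≠ 0 := by linarith
  rw [g2, Nf''_eq hs, Nf', Nf, hs]
  simp only [zero_add, add_zero, zero_mul]
  field_simp
  linear_combination (-s) * sq_of_sqrt_eq hs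

lemma hf_pos (hγ : -1 < γ) (l : ℝ) : 0 < hf γ 0 0 l := by
  have hs1 := one_le_of_sqrt_eq (l := l) rfl
  rw [hf_eq hγ rfl]
  apply div_pos _ (by nlinarith)
  nlinarith [sq_nonneg (√(l ^ 2 + 1) - 1)]

lemma fukasawaCond_iff_forall_G1_pos (hγ : -1 < γ) :
    FukasawaCond γ b 0 0 ↔ ∀ l, 0 < G1 γ b 0 0 l := by
  refine forall_congr' fun l => ⟨fun h => mul_pos h.1 h.2, fun h => ?_⟩
  have := hf_pos hγ l
  rw [G1] at h
  rcases mul_pos_iff.1 h with h | h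
  · exact h
  · constructor <;> linarith

noncomputable def γHat : ℝ := -√((9 + 5 * √3) / 18)

noncomputable def lHat : ℝ := 3 ^ (-(1 : ℝ) / 4)

noncomputable def sHat : ℝ := √((3 + √3) / 3)

lemma sqrt_three_sq : √3 ^ 2 = 3 := Real.sq_sqrt (by norm_num)

lemma sqrt_three_bounds : 1.7320508 < √3 ∧ √3 < 1.7320509 :=
  ⟨(Real.lt_sqrt (by norm_num)).2 (by norm_num), (Real.sqrt_lt' (by norm_num)).2 (by norm_num)⟩

lemma three_mul_sqrt_three_sub_five_pos : 0 < 3 * √3 - 5 := by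
  linarith [sqrt_three_bounds.1]

lemma sHat_sq : sHat ^ 2 = (3 + √3) / 3 := Real.sq_sqrt (by positivity)

lemma sHat_bounds : 1.2559260 < sHat ∧ sHat < 1.2559261 := by
  obtain ⟨h₁, h₂⟩ := sqrt_three_bounds
  exact ⟨(Real.lt_sqrt (by norm_num)).2 (by linarith),
    (Real.sqrt_lt' (by norm_num)).2 (by linarith)⟩

/-- Each constant in the certificates below is bilinear in `√3` and `sHat`, hence `linarith`
proves it positive from these four products. -/
lemma corner_products :
    0 < (√3 - 1.7320508) * (sHat - 1.2559260) ∧ 0 < (√3 - 1.7320508) * (1.2559261 - sHat) ∧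
      0 < (1.7320509 - √3) * (sHat - 1.2559260) ∧ 0 < (1.7320509 - √3) * (1.2559261 - sHat) := by
  obtain ⟨hr₀, hr₁⟩ := sqrt_three_bounds
  obtain ⟨ht₀, ht₁⟩ := sHat_bounds
  refine ⟨?_, ?_, ?_, ?_⟩ <;> apply mul_pos <;> linarith

lemma γHat_eq : γHat = -((3 + √3) * sHat / 6) := by
  have h : (9 + 5 * √3) / 18 = ((3 + √3) * sHat / 6) ^ 2 := by
    linear_combination (-1/18 - sHat ^ 2 / 36) * sqrt_three_sq + (-1/3 - √3 / 6) * sHat_sq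
  rw [γHat, h, Real.sqrt_sq (by rw [sHat]; positivity)]

lemma neg_one_lt_γHat : -1 < γHat := by
  obtain ⟨-, hr₁⟩ := sqrt_three_bounds
  obtain ⟨ht₀, ht₁⟩ := sHat_bounds
  rw [γHat_eq]
  nlinarith

lemma lHat_sq : lHat ^ 2 = √3 / 3 := by
  rw [lHat, ← Real.rpow_natCast, ← Real.rpow_mul (by norm_num),
    show -(1 : ℝ) / 4 * (2 : ℕ) = -(1 / 2) by norm_num, Real.rpow_neg (by norm_num),
    ← Real.sqrt_eq_rpow]
  field_simp
  linear_combination -sqrt_three_sq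

lemma sqrt_lHat_sq_add_one : √(lHat ^ 2 + 1) = sHat := by
  rw [lHat_sq, sHat]
  ring_nf

lemma G1_lHat : G1 γHat b 0 0 lHat = (√3 - 1) / 32 * (4 * (3 * √3 - 5) - b ^ 2) := by
  have hC : 0 < γHat + sHat := by linarith [neg_one_lt_γHat, sHat_bounds.1]
  have hs : 0 < sHat := by linarith [sHat_bounds.1]
  rw [G1_eq neg_one_lt_γHat sqrt_lHat_sq_add_one, div_eq_iff (by positivity [hC.ne']), γHat_eq]
  linear_combination (2/3 + (10/3)*sHat^2 + (1/6)*sHat^2*b^2 + (-9/2)*sHat^4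
      + (-1/8)*sHat^4*b^2 + (13/9)*√3*sHat^4 + (1/72)*√3*sHat^4*b^2
      + (-1/6)*√3^2*sHat^4) * sqrt_three_sq
    + (-6 + -16*sHat^2 + (-3/4)*sHat^2*b^2 + 2*√3 + 10*√3*sHat^2
      + (5/12)*√3*sHat^2*b^2) * sHat_sq

lemma g2_lHat : g2 γHat 0 lHat = -(3 * sHat * (3 * √3 - 5) / 4) := by
  have hC : 0 < γHat + sHat := by linarith [neg_one_lt_γHat, sHat_bounds.1]
  have hs : 0 < sHat := by linarith [sHat_bounds.1]
  rw [g2_eq neg_one_lt_γHat sqrt_lHat_sq_add_one, div_eq_iff (by positivity [hC.ne']), γHat_eq]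
  linear_combination ((1/2)*sHat + (7/6)*sHat^3 + (-3/4)*sHat^5) * sqrt_three_sq
    + ((-7/2)*sHat + -6*sHat^3 + (3/2)*√3*sHat + (7/2)*√3*sHat^3) * sHat_sq

lemma fukasawa_poly_le (hs : 1 ≤ s) :
    (3 * √3 - 5) * (s ^ 2 - 1) * (γHat + s) ^ 2 ≤ (s ^ 2 + 2 * γHat * s + 1) ^ 2 := by
  obtain ⟨h₁, h₂, h₃, h₄⟩ := corner_products
  have hp₀ : 0 < 22/3 - 10/3 * √3 + (8 - 16/3 * √3) * sHat := by linarith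
  have hp₁ : 0 < 12 - 6 * √3 + (8 - 16/3 * √3) * sHat := by linarith
  have hp₂ : 0 < 6 - 3 * √3 := by linarith [sqrt_three_bounds.2]
  have key : (s ^ 2 + 2 * γHat * s + 1) ^ 2 - (3 * √3 - 5) * (s ^ 2 - 1) * (γHat + s) ^ 2
      = (22/3 - 10/3 * √3 + (8 - 16/3 * √3) * sHat) * (s - sHat) ^ 2
        + (12 - 6 * √3 + (8 - 16/3 * √3) * sHat) * (s - 1) * (s - sHat) ^ 2
        + (6 - 3 * √3) * ((s - 1) * (s - sHat)) ^ 2 := by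
    rw [γHat_eq]
    linear_combination (1/6 + (-43/18)*s^2 + (7/9)*sHat*s + sHat*s^3 + (13/36)*sHat^2
        + (-1/4)*sHat^2*s^2 + (1/12)*√3*sHat^2 + (-1/12)*√3*sHat^2*s^2) * sqrt_three_sq
      + (-3/2 + (23/2)*s^2 + -8*sHat*s + (1/2)*√3 + (-43/6)*√3*s^2
        + (16/3)*√3*sHat*s) * sHat_sq
  have hs₁ : 0 ≤ s - 1 := by linarith
  rw [← sub_nonneg, key]
  positivity [mul_nonneg (mul_nonneg hp₁.le hs₁) (sq_nonneg (s - sHat))]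

lemma butterfly_poly_nonneg (hs : 1 ≤ s) :
    0 ≤ (√3 - 1) * (γHat + s) * (-s ^ 3 + 3 * s + 2 * γHat)
      + 3 * sHat * s * (s ^ 2 + 2 * γHat * s + 1) ^ 2 := by
  obtain ⟨h₁, h₂, h₃, h₄⟩ := corner_products
  have he₀ : 0 < -2/3 - 8/3 * √3 + (10 - 10/3 * √3) * sHat := by linarith
  have he₁ : 0 < -2 - 6 * √3 + (16 - 10/3 * √3) * sHat := by linarith
  have he₂ : 0 < -1 - 3 * √3 + 9 * sHat := by linarith
  have he₃ : 0 < 3 * sHat := by linarith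
  have key : (√3 - 1) * (γHat + s) * (-s ^ 3 + 3 * s + 2 * γHat)
        + 3 * sHat * s * (s ^ 2 + 2 * γHat * s + 1) ^ 2
      = (-2/3 - 8/3 * √3 + (10 - 10/3 * √3) * sHat) * (s - sHat) ^ 2
        + (-2 - 6 * √3 + (16 - 10/3 * √3) * sHat) * (s - 1) * (s - sHat) ^ 2
        + (-1 - 3 * √3 + 9 * sHat) * ((s - 1) * (s - sHat)) ^ 2
        + 3 * sHat * (s - 1) ^ 3 * (s - sHat) ^ 2 := by
    rw [γHat_eq]
    linear_combination ((-17/9)*s^2 + (-2/3)*s^4 + (5/18)*sHat*s + (5/6)*sHat*s^3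
        + (5/18)*sHat^2 + (1/3)*sHat^3*s^3 + (1/18)*√3*sHat^2) * sqrt_three_sq
      + (9*s^2 + -7*sHat*s + sHat*s^3 + (-17/3)*√3*s^2 + -2*√3*s^4 + (10/3)*√3*sHat*s
        + 2*√3*sHat*s^3) * sHat_sq
  have hs₁ : 0 ≤ s - 1 := by linarith
  rw [key]
  positivity [mul_nonneg (mul_nonneg he₁.le hs₁) (sq_nonneg (s - sHat)),
    mul_nonneg (mul_nonneg he₃.le (pow_nonneg hs₁ 3)) (sq_nonneg (s - sHat))]

lemma fukasawaCond_γHat_iff : FukasawaCond γHat b 0 0 ↔ b ^ 2 < 4 * (3 * √3 - 5) := by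
  have hu := three_mul_sqrt_three_sub_five_pos
  rw [fukasawaCond_iff_forall_G1_pos neg_one_lt_γHat]
  constructor
  · intro h
    have hG := h lHat
    rw [G1_lHat] at hG
    have : 0 < √3 - 1 := by linarith [sqrt_three_bounds.1]
    nlinarith
  · intro hb l
    obtain ⟨s, hs⟩ : ∃ s, √(l ^ 2 + 1) = s := ⟨_, rfl⟩
    have hs₁ := one_le_of_sqrt_eq hs
    have hC : 0 < γHat + s := by linarith [neg_one_lt_γHat]
    have hA : 0 < s ^ 2 + 2 * γHat * s + 1 := by nlinarith [neg_one_lt_γHat]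
    have hP := fukasawa_poly_le hs₁
    rw [G1_eq neg_one_lt_γHat hs]
    refine div_pos ?_ (by positivity)
    nlinarith [mul_nonneg (sq_nonneg b) (sub_nonneg.2 hP), mul_pos (sub_pos.2 hb) (pow_pos hA 2)]

lemma g2_lHat_mul_G1_le (hb : b ^ 2 ≤ 4 * (3 * √3 - 5)) (l : ℝ) :
    g2 γHat 0 lHat * G1 γHat b 0 0 l ≤ G1 γHat b 0 0 lHat * g2 γHat 0 l := by
  obtain ⟨s, hs⟩ : ∃ s, √(l ^ 2 + 1) = s := ⟨_, rfl⟩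
  have hs₁ := one_le_of_sqrt_eq hs
  have hC : 0 < γHat + s := by linarith [neg_one_lt_γHat]
  have hŝ : 0 < sHat := by linarith [sHat_bounds.1]
  have key : G1 γHat b 0 0 lHat * g2 γHat 0 l - g2 γHat 0 lHat * G1 γHat b 0 0 l
      = ((4 * (3 * √3 - 5) - b ^ 2) / 4
            * ((√3 - 1) * (γHat + s) * (-s ^ 3 + 3 * s + 2 * γHat)
              + 3 * sHat * s * (s ^ 2 + 2 * γHat * s + 1) ^ 2)
          + b ^ 2 / 4 * (3 * sHat * s * ((s ^ 2 + 2 * γHat * s + 1) ^ 2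
              - (3 * √3 - 5) * (s ^ 2 - 1) * (γHat + s) ^ 2)))
        / (16 * s ^ 3 * (γHat + s) ^ 2) := by
    rw [G1_lHat, g2_lHat, G1_eq neg_one_lt_γHat hs, g2_eq neg_one_lt_γHat hs]
    field_simp
    ring
  have hb' := sub_nonneg.2 hb
  have hE := butterfly_poly_nonneg hs₁
  have hP := sub_nonneg.2 (fukasawa_poly_le hs₁)
  rw [← sub_nonneg, key]
  positivity

end SymmetricSVI

open SymmetricSVI in
/-- no-arbitrage domain for the Symmetric SVI at the exceptional level
γ̂ = −√((9+5√3)/18), where l̂ = 3^(−1/4). -/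
theorem symmetric_exceptional_gamma (b σ : ℝ) (hb : 0 < b) (hσ : 0 < σ) :
    ArbitrageFree (-Real.sqrt ((9 + 5 * Real.sqrt 3) / 18)) b 0 0 σ ↔
      b < 2 * Real.sqrt (3 * Real.sqrt 3 - 5) ∧
      σ ≥ -(b * g2 (-Real.sqrt ((9 + 5 * Real.sqrt 3) / 18)) 0 ((3 : ℝ) ^ (-(1 : ℝ) / 4))) /
        (2 * G1 (-Real.sqrt ((9 + 5 * Real.sqrt 3) / 18)) b 0 0 ((3 : ℝ) ^ (-(1 : ℝ) / 4))) := by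
  show ArbitrageFree γHat b 0 0 σ ↔
    b < 2 * √(3 * √3 - 5) ∧ σ ≥ -(b * g2 γHat 0 lHat) / (2 * G1 γHat b 0 0 lHat)
  have hbound : b ^ 2 < 4 * (3 * √3 - 5) ↔ b < 2 * √(3 * √3 - 5) := by
    rw [← pow_lt_pow_iff_left₀ hb.le (by positivity) two_ne_zero, mul_pow,
      Real.sq_sqrt three_mul_sqrt_three_sub_five_pos.le]
    norm_num
  have hG1 := (fukasawaCond_iff_forall_G1_pos (b := b) neg_one_lt_γHat).1
  rw [ArbitrageFree, ← hbound, ← fukasawaCond_γHat_iff]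
  refine and_congr_right fun hF => ?_
  rw [ge_iff_le, ← add_div_mul_nonneg_iff hσ (hG1 hF lHat)]
  exact ⟨fun h => h lHat, fun h l => add_mul_nonneg_of_mul_le_mul (hG1 hF l).le (hG1 hF lHat)
    (by positivity) (g2_lHat_mul_G1_le (fukasawaCond_γHat_iff.1 hF).le l) h⟩
end

section
/- (G₁ is strictly decreasing at the second zero of g₂.) Let γ ∈ ℝ, b > 0, ρ ∈ (−1,1), μ ∈ ℝ with γ + √(1−ρ²) > 0, and set l* = −ρ/√(1−ρ²). Suppose l₂ > l* satisfies g₂(l₂) = 0 (so that N''(l₂) = N'(l₂)²/(2·N(l₂)) and N'(l₂) > 0) and suppose μ < 2·N(l₂)/N'(l₂) − b·N(l₂)/2 − l₂. Then the derivative of G₁ at l₂ is strictly negative: G₁'(l₂) < 0. -/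
/-!
At a zero of `g₂` we have `N'' = N'²/(2N)`, and differentiating `h` and `g` gives
`h' = -(N'/(2N))·h` and `g' = (N'/(2N))·g` there. Since `G₁ = h² - b²g²`, this yields
`G₁' = -(N'/N)·(h² + b²g²)`. Moreover `N ≥ N(l*) = γ + √(1-ρ²) > 0`, and `N' > 0`
past the minimum point `l*` of `N`, so `g = N'/4 > 0` and `G₁' < 0`.
-/

open Real

/-- The rotation `(1, l) ↦ (√(1-ρ²) - ρ l, √(1-ρ²) l + ρ)` preserves the Euclidean norm. -/
lemma sq_sqrt_one_sub_sq_sub_mul_add_sq {ρ : ℝ} (hρ : ρ ^ 2 ≤ 1) (l : ℝ) :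
    (√(1 - ρ ^ 2) - ρ * l) ^ 2 + (√(1 - ρ ^ 2) * l + ρ) ^ 2 = l ^ 2 + 1 := by
  linear_combination (1 + l ^ 2) * sq_sqrt (sub_nonneg.mpr hρ)

lemma sqrt_one_sub_sq_sub_mul_le {ρ : ℝ} (hρ : ρ ^ 2 ≤ 1) (l : ℝ) :
    √(1 - ρ ^ 2) - ρ * l ≤ √(l ^ 2 + 1) :=
  le_sqrt_of_sq_le <| by
    linarith [sq_sqrt_one_sub_sq_sub_mul_add_sq hρ l, sq_nonneg (√(1 - ρ ^ 2) * l + ρ)]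

lemma sqrt_one_sub_sq_sub_mul_lt {ρ l : ℝ} (hρ : ρ ^ 2 ≤ 1) (hl : √(1 - ρ ^ 2) * l + ρ ≠ 0) :
    √(1 - ρ ^ 2) - ρ * l < √(l ^ 2 + 1) :=
  lt_sqrt_of_sq_lt <| by
    linarith [sq_sqrt_one_sub_sq_sub_mul_add_sq hρ l, sq_pos_of_ne_zero hl]

lemma add_sqrt_one_sub_sq_le_Nf (γ : ℝ) {ρ : ℝ} (hρ : ρ ^ 2 ≤ 1) (l : ℝ) :
    γ + √(1 - ρ ^ 2) ≤ Nf γ ρ l := by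
  have := sqrt_one_sub_sq_sub_mul_le hρ l
  unfold Nf
  linarith

lemma Nf'_pos {ρ l : ℝ} (hρ : ρ ∈ Set.Ioo (-1 : ℝ) 1) (hl : -ρ / √(1 - ρ ^ 2) < l) :
    0 < Nf' ρ l := by
  obtain ⟨hρ₁, hρ₂⟩ := hρ
  have hρ_sq : ρ ^ 2 ≤ 1 := by nlinarith
  set s := √(1 - ρ ^ 2)
  set t := √(l ^ 2 + 1)
  have hs : 0 < s := sqrt_pos.mpr (by nlinarith)
  have ht : 0 < t := sqrt_pos.mpr (by positivity)
  have hsl : 0 < s * l + ρ := by rw [div_lt_iff₀ hs] at hl; linarith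
  have hgap : 0 < t - s + ρ * l := by
    linarith [sqrt_one_sub_sq_sub_mul_lt hρ_sq hsl.ne']
  -- half-angle identity: with `l = tan θ`, `ρ = sin φ` it reads
  -- `(sin θ + sin φ) sin (θ + φ) = (1 - cos (θ + φ)) (cos θ + cos φ)` up to the factor `cos² θ`
  have key : (l + ρ * t) * (s * l + ρ) = (t - s + ρ * l) * (1 + s * t) := by
    linear_combination (-s) * sq_sqrt (show 0 ≤ l ^ 2 + 1 by positivity)
      + t * sq_sqrt (show 0 ≤ 1 - ρ ^ 2 by linarith)
  have hnum : 0 < l + ρ * t :=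
    pos_of_mul_pos_left (key ▸ mul_pos hgap (by positivity)) hsl.le
  have : Nf' ρ l = (l + ρ * t) / t := by unfold Nf'; field_simp; ring
  rw [this]
  positivity

lemma hasDerivAt_sqrt_sq_add_one (l : ℝ) :
    HasDerivAt (fun x : ℝ => √(x ^ 2 + 1)) (l / √(l ^ 2 + 1)) l := by
  have hinner : HasDerivAt (fun x : ℝ => x ^ 2 + 1) (2 * l) l := by
    simpa using (hasDerivAt_pow 2 l).add_const 1
  refine ((hasDerivAt_sqrt (by positivity : l ^ 2 + 1 ≠ 0)).comp l hinner).congr_deriv ?_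
  field_simp

lemma hasDerivAt_Nf (γ ρ l : ℝ) : HasDerivAt (Nf γ ρ) (Nf' ρ l) l := by
  refine ((((hasDerivAt_id l).const_mul ρ).const_add γ).add
    (hasDerivAt_sqrt_sq_add_one l)).congr_deriv ?_
  simp [Nf']

lemma Nf''_eq_inv_sqrt_pow (l : ℝ) : Nf'' l = (√(l ^ 2 + 1) ^ 3)⁻¹ := by
  rw [Nf'', show (-(3 : ℝ) / 2) = -((1 / 2) * 3) by ring, rpow_neg (by positivity),
    rpow_mul (by positivity), sqrt_eq_rpow]
  norm_cast

lemma hasDerivAt_Nf' (ρ l : ℝ) : HasDerivAt (Nf' ρ) (Nf'' l) l := by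
  have ht : √(l ^ 2 + 1) ≠ 0 := by positivity
  refine (((hasDerivAt_id l).div (hasDerivAt_sqrt_sq_add_one l) ht).const_add ρ).congr_deriv ?_
  rw [Nf''_eq_inv_sqrt_pow, id]
  field_simp
  linear_combination sq_sqrt (show 0 ≤ l ^ 2 + 1 by positivity)

lemma hasDerivAt_hf {γ ρ l : ℝ} (μ : ℝ) (hN : Nf γ ρ l ≠ 0) :
    HasDerivAt (hf γ ρ μ)
      (-(Nf' ρ l / (2 * Nf γ ρ l)) * hf γ ρ μ l - (l + μ) / (2 * Nf γ ρ l) * g2 γ ρ l) l := by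
  have hquot := ((hasDerivAt_Nf' ρ l).mul ((hasDerivAt_id l).add_const μ)).div
    ((hasDerivAt_Nf γ ρ l).const_mul 2) (mul_ne_zero two_ne_zero hN)
  refine (hquot.const_sub 1).congr_deriv ?_
  simp only [hf, g2, Pi.mul_apply, id]
  field_simp
  ring

lemma hasDerivAt_gf (ρ l : ℝ) : HasDerivAt (gf ρ) (Nf'' l / 4) l :=
  (hasDerivAt_Nf' ρ l).div_const 4

lemma hasDerivAt_G1_of_g2_eq_zero {γ ρ l : ℝ} (b μ : ℝ) (hN : Nf γ ρ l ≠ 0)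
    (hzero : g2 γ ρ l = 0) :
    HasDerivAt (G1 γ b ρ μ)
      (-(Nf' ρ l / Nf γ ρ l) * (hf γ ρ μ l ^ 2 + (b * gf ρ l) ^ 2)) l := by
  have hN'' : Nf'' l = Nf' ρ l ^ 2 / (2 * Nf γ ρ l) := sub_eq_zero.mp hzero
  have hh := hasDerivAt_hf μ hN
  have hg := (hasDerivAt_gf ρ l).const_mul b
  refine ((hh.sub hg).mul (hh.add hg)).congr_deriv ?_
  simp only [Pi.add_apply, Pi.sub_apply, hzero, hN'', gf]
  field_simp
  ring

theorem G1_decreasing_at_second_zero_general (γ b ρ μ l₂ : ℝ) (hb : 0 < b)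
    (hρ : ρ ∈ Set.Ioo (-1 : ℝ) 1) (hγ : 0 < γ + Real.sqrt (1 - ρ ^ 2))
    (hl₂ : -ρ / Real.sqrt (1 - ρ ^ 2) < l₂)
    (hzero : g2 γ ρ l₂ = 0) :
    deriv (G1 γ b ρ μ) l₂ < 0 := by
  have hρ_sq : ρ ^ 2 ≤ 1 := by nlinarith [hρ.1, hρ.2]
  have hN : 0 < Nf γ ρ l₂ := hγ.trans_le (add_sqrt_one_sub_sq_le_Nf γ hρ_sq l₂)
  have hN' : 0 < Nf' ρ l₂ := Nf'_pos hρ hl₂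
  have hbg : 0 < b * gf ρ l₂ := mul_pos hb (div_pos hN' four_pos)
  rw [(hasDerivAt_G1_of_g2_eq_zero b μ hN.ne' hzero).deriv]
  exact mul_neg_of_neg_of_pos (neg_neg_of_pos (div_pos hN' hN)) (by positivity)

/-- G₁ is strictly decreasing at the second zero of g₂. -/
theorem G1_decreasing_at_second_zero (γ b ρ μ l₂ : ℝ) (hb : 0 < b)
    (hρ : ρ ∈ Set.Ioo (-1 : ℝ) 1) (hγ : 0 < γ + Real.sqrt (1 - ρ ^ 2))
    (hl₂ : -ρ / Real.sqrt (1 - ρ ^ 2) < l₂)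
    (hzero : g2 γ ρ l₂ = 0)
    (hμ : μ < 2 * Nf γ ρ l₂ / Nf' ρ l₂ - b * Nf γ ρ l₂ / 2 - l₂) :
    deriv (G1 γ b ρ μ) l₂ < 0 :=
  G1_decreasing_at_second_zero_general γ b ρ μ l₂ hb hρ hγ hl₂ hzero
end

section
/- (For γ > 0, the point l* lies in the Fukasawa interval.) Let γ > 0, ρ ∈ (−1,1), b > 0 with b·(1+|ρ|) ≤ 2, and set l* = −ρ/√(1−ρ²), L₋(l) = 2·N(l)·(1/N'(l) + b/4) − l, L₊(l) = 2·N(l)·(1/N'(l) − b/4) − l. Then for every l < l* one has L₋(l) < l*, and for every l > l* one has l* < L₊(l). (Here N'(l) < 0 for l < l* and N'(l) > 0 for l > l*.) -/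
set_option maxHeartbeats 1000000 in
private lemma key_upper (γ b ρ l : ℝ) (hγ : 0 < γ) (hρ1 : -1 < ρ) (hρ2 : ρ < 1)
    (hb : 0 < b) (hb2 : b * (1 + |ρ|) ≤ 2)
    (hl : -ρ / Real.sqrt (1 - ρ ^ 2) < l) :
    -ρ / Real.sqrt (1 - ρ ^ 2) < 2 * Nf γ ρ l * (1 / Nf' ρ l - b / 4) - l := by
  simp only [Nf, Nf'] at *
  set s := Real.sqrt (1 - ρ ^ 2) with hsdef
  set u := Real.sqrt (l ^ 2 + 1) with hudef
  have hs0 : 0 < s := Real.sqrt_pos.mpr (by nlinarith)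
  have hs2 : s ^ 2 = 1 - ρ ^ 2 := Real.sq_sqrt (by nlinarith)
  have hu0 : 0 < u := Real.sqrt_pos.mpr (by positivity)
  have hu2 : u ^ 2 = l ^ 2 + 1 := Real.sq_sqrt (by positivity)
  have hlu : l < u := by nlinarith [hu2, hu0, sq_nonneg (u - l), sq_nonneg (u + l)]
  have hls : -ρ < l * s := by rw [div_lt_iff₀ hs0] at hl; linarith
  -- A := ρ*u + l > 0
  have hA : 0 < ρ * u + l := by
    rcases le_or_gt 0 ρ with h0 | h0
    · rcases lt_or_ge 0 l with h1 | h1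
      · nlinarith [mul_nonneg h0 hu0.le]
      · have hls0 : l * s ≤ 0 := mul_nonpos_of_nonpos_of_nonneg h1 hs0.le
        have hρpos : 0 < ρ := by linarith
        have hsq : l ^ 2 * s ^ 2 < ρ ^ 2 := by
          nlinarith [mul_pos (show (0:ℝ) < ρ + l * s by linarith)
            (show (0:ℝ) < ρ - l * s by linarith)]
        have e_u : ρ ^ 2 * u ^ 2 = ρ ^ 2 * l ^ 2 + ρ ^ 2 := by linear_combination ρ ^ 2 * hu2
        have e_s : l ^ 2 * s ^ 2 = l ^ 2 - l ^ 2 * ρ ^ 2 := by linear_combination l ^ 2 * hs2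
        nlinarith [mul_pos hρpos hu0, hsq, e_u, e_s]
    · have hl0 : 0 < l := by
        by_contra h
        push_neg at h
        nlinarith [mul_nonneg (neg_nonneg.2 h) hs0.le]
      have hsq : ρ ^ 2 < l ^ 2 * s ^ 2 := by
        nlinarith [mul_pos (show (0:ℝ) < l * s + ρ by linarith)
          (show (0:ℝ) < l * s - ρ by nlinarith [mul_pos (mul_pos hl0 hs0) (show (0:ℝ) < -ρ by linarith)])]
      have e_u : ρ ^ 2 * u ^ 2 = ρ ^ 2 * l ^ 2 + ρ ^ 2 := by linear_combination ρ ^ 2 * hu2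
      have e_s : l ^ 2 * s ^ 2 = l ^ 2 - l ^ 2 * ρ ^ 2 := by linear_combination l ^ 2 * hs2
      nlinarith [mul_pos (show (0:ℝ) < -ρ by linarith) hu0, hl0, hsq, e_u, e_s]
  have hρs : ρ ^ 2 < 1 := by
    nlinarith [mul_pos (show (0:ℝ) < 1 - ρ by linarith) (show (0:ℝ) < 1 + ρ by linarith)]
  have hN0 : 0 < ρ * l + u := by
    rcases le_or_gt 0 (ρ * l) with h | h
    · linarith
    · have h2 : (ρ * l) ^ 2 < u ^ 2 := by
        nlinarith [mul_nonneg (show (0:ℝ) ≤ 1 - ρ ^ 2 by linarith) (sq_nonneg l)]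
      nlinarith [h2, hu0, mul_pos (show (0:ℝ) < -(ρ * l) by linarith) hu0]
  have hN : 0 < γ + ρ * l + u := by linarith
  have habs : |ρ| < 1 := abs_lt.mpr ⟨hρ1, hρ2⟩
  have hcpos : (0:ℝ) < 1 + |ρ| := by positivity
  have hAc : ρ * u + l < (1 + |ρ|) * u := by
    have h1 : ρ * u ≤ |ρ| * u := mul_le_mul_of_nonneg_right (le_abs_self ρ) hu0.le
    nlinarith
  -- crucial inequality, multiplied through by c = 1 + |ρ| (division-free)
  have hQG : 0 < s * ((1 + |ρ|) * (2 * (γ + ρ * l + u) * u - l * (ρ * u + l))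
      - (γ + ρ * l + u) * (ρ * u + l)) + (1 + |ρ|) * (ρ * (ρ * u + l)) := by
    rcases abs_cases ρ with ⟨he, h0⟩ | ⟨he, h0⟩
    · rw [he]
      have hc1 : (0:ℝ) < 1 + ρ := by linarith
      rw [he] at hAc
      have f1 : 0 ≤ s * ((γ + ρ * l + u) * ((1 + ρ) * u - (ρ * u + l))) :=
        mul_nonneg hs0.le (mul_nonneg hN.le (by linarith only [hAc]))
      have e1 : s * ((1 + ρ) * ((γ + ρ * l + u) * u - l * (ρ * u + l)))
          = (1 + ρ) * (s * γ * u) + (1 + ρ) * s := by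
        linear_combination (1 + ρ) * s * hu2
      have f2 : 0 ≤ (1 + ρ) * (ρ * (ρ * u + l)) :=
        mul_nonneg hc1.le (mul_nonneg h0 hA.le)
      have f3 : 0 < (1 + ρ) * (s * γ * u) := mul_pos hc1 (mul_pos (mul_pos hs0 hγ) hu0)
      have f4 : 0 < (1 + ρ) * s := mul_pos hc1 hs0
      nlinarith [f1, e1, f2, f3, f4]
    · rw [he, show (1:ℝ) + -ρ = 1 - ρ from by ring]
      rw [he, show (1:ℝ) + -ρ = 1 - ρ from by ring] at hAc
      have hc : (0:ℝ) < 1 - ρ := by linarith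
      have hl0 : 0 < l := by
        by_contra h
        push_neg at h
        nlinarith [mul_nonneg (neg_nonneg.2 h) hs0.le]
      have hAl : ρ * u + l ≤ (1 + ρ) * l := by
        nlinarith [mul_nonneg (show (0:ℝ) ≤ -ρ by linarith) (show (0:ℝ) ≤ u - l by linarith)]
      have hK : (0:ℝ) ≤ 2 * ρ ^ 2 - ρ + 1 := by nlinarith
      have h5 : l * u - l ^ 2 ≤ 1 / 2 := by nlinarith [sq_nonneg (u - l)]
      have hT : -2 * ρ * (1 + ρ) * l ^ 2 + 3 / 2
          ≤ (1 - 3 * ρ) * l ^ 2 - (2 * ρ ^ 2 - ρ + 1) * (l * u) + (2 - 3 * ρ) := by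
        nlinarith [mul_nonneg hK (show (0:ℝ) ≤ 1 / 2 - (l * u - l ^ 2) by linarith),
          mul_pos (show (0:ℝ) < -ρ by linarith) (show (0:ℝ) < ρ + 5 / 2 by linarith)]
      have hquad : 0 ≤ -2 * ρ * (1 + ρ) * l ^ 2 + ρ * s * l + 3 / 2 := by
        have hd : ρ * (1 + ρ) * (ρ * (1 - ρ) + 12) < 0 := by
          nlinarith [mul_pos (mul_pos (show (0:ℝ) < -ρ by linarith)
            (show (0:ℝ) < 1 + ρ by linarith)) (show (0:ℝ) < ρ * (1 - ρ) + 12 by nlinarith)]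
        nlinarith [sq_nonneg (4 * ρ * (1 + ρ) * l - ρ * s), hd, hs2,
          mul_pos (show (0:ℝ) < -ρ by linarith) (show (0:ℝ) < 1 + ρ by linarith)]
      have hST : 0 ≤ s * (-(2 * ρ ^ 2 - ρ + 1) * (l * u) + (1 - 3 * ρ) * l ^ 2 + (2 - 3 * ρ))
          + ρ * (1 - ρ) * (ρ * u + l) := by
        have a1 := mul_le_mul_of_nonneg_left hT hs0.le
        have a2 : ρ * (1 - ρ) * ((1 + ρ) * l) ≤ ρ * (1 - ρ) * (ρ * u + l) :=
          mul_le_mul_of_nonpos_left hAl (by nlinarith)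
        have a3 := mul_nonneg hs0.le hquad
        have e2 : ρ * (1 - ρ) * ((1 + ρ) * l) = ρ * s ^ 2 * l := by
          linear_combination -ρ * l * hs2
        nlinarith [a1, a2, a3, e2]
      have hid : s * ((1 - ρ) * (2 * (ρ * l + u) * u - l * (ρ * u + l))
            - (ρ * l + u) * (ρ * u + l))
          = s * (-(2 * ρ ^ 2 - ρ + 1) * (l * u) + (1 - 3 * ρ) * l ^ 2 + (2 - 3 * ρ)) := by
        linear_combination s * (2 - 3 * ρ) * hu2
      have hγpart : 0 < s * (γ * ((1 - ρ) * (2 * u) - (ρ * u + l))) :=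
        mul_pos hs0 (mul_pos hγ (by linarith only [hAc, mul_pos hc hu0]))
      linarith only [hST, hid, hγpart]
  -- use b*(1+|ρ|) ≤ 2
  have FI : 0 < s * (2 * (γ + ρ * l + u) * u - b / 2 * ((γ + ρ * l + u) * (ρ * u + l))
      - l * (ρ * u + l)) + ρ * (ρ * u + l) := by
    have h10 : 0 ≤ s * ((γ + ρ * l + u) * (ρ * u + l)) * (1 - (1 + |ρ|) * (b / 2)) :=
      mul_nonneg (mul_nonneg hs0.le (mul_pos hN hA).le) (by linarith only [hb2])
    by_contra hcon
    push_neg at hcon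
    have h11 := mul_nonneg hcpos.le (neg_nonneg.2 hcon)
    linarith only [hQG, h10, h11]
  -- convert to the goal
  have hne1 : ρ + l / u ≠ 0 := by
    have he1 : ρ + l / u = (ρ * u + l) / u := by field_simp
    rw [he1]
    exact ne_of_gt (div_pos hA hu0)
  have hgoal_eq : 2 * (γ + ρ * l + u) * (1 / (ρ + l / u) - b / 4) - l - (-ρ / s)
      = (s * (2 * (γ + ρ * l + u) * u - b / 2 * ((γ + ρ * l + u) * (ρ * u + l))
        - l * (ρ * u + l)) + ρ * (ρ * u + l)) / (s * (ρ * u + l)) := by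
    field_simp
    ring
  have hpos := div_pos FI (mul_pos hs0 hA)
  rw [← hgoal_eq] at hpos
  linarith


/-- for γ > 0 the point l* = −ρ/√(1−ρ²) lies in the Fukasawa interval:
L₋(l) < l* for all l < l* and l* < L₊(l) for all l > l*. -/
theorem lstar_in_fukasawa_interval (γ b ρ : ℝ) (hγ : 0 < γ)
    (hρ : ρ ∈ Set.Ioo (-1 : ℝ) 1) (hb : 0 < b) (hb2 : b * (1 + |ρ|) ≤ 2) :
    (∀ l < -ρ / Real.sqrt (1 - ρ ^ 2),
      2 * Nf γ ρ l * (1 / Nf' ρ l + b / 4) - l < -ρ / Real.sqrt (1 - ρ ^ 2)) ∧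
    (∀ l > -ρ / Real.sqrt (1 - ρ ^ 2),
      -ρ / Real.sqrt (1 - ρ ^ 2) < 2 * Nf γ ρ l * (1 / Nf' ρ l - b / 4) - l) := by
  obtain ⟨hρ1, hρ2⟩ := hρ
  constructor
  · intro l hl
    have hl' : -(-ρ) / Real.sqrt (1 - (-ρ) ^ 2) < -l := by
      rw [neg_neg, neg_sq]
      rw [neg_div] at hl
      linarith [hl]
    have h := key_upper γ b (-ρ) (-l) hγ (by linarith) (by linarith) hb
      (by rwa [abs_neg]) hl'
    have e1 : Nf γ (-ρ) (-l) = Nf γ ρ l := by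
      unfold Nf; rw [show ((-l : ℝ)) ^ 2 = l ^ 2 from by ring]; ring
    have e2 : Nf' (-ρ) (-l) = -Nf' ρ l := by
      unfold Nf'; rw [show ((-l : ℝ)) ^ 2 = l ^ 2 from by ring]; ring
    rw [neg_neg, neg_sq, e1, e2] at h
    have e3 : 2 * Nf γ ρ l * (1 / -Nf' ρ l - b / 4) - -l
        = -(2 * Nf γ ρ l * (1 / Nf' ρ l + b / 4) - l) := by
      ring
    rw [e3] at h
    rw [neg_div]
    linarith [h]
  · intro l hl
    exact key_upper γ b ρ l hγ hρ1 hρ2 hb hb2 hl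
end
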